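/- arXiv:1809.03803 — 6 statements merged into one kernel-verified Lean document; each statement's English description precedes it below -/
import Mathlib

section
/- Let r ≥ 1 and let (q₁(0), q₁(1), ..., q_r(0), q_r(1)) be a finite sequence of elements of some set, indexed by pairs (j,i) with j ∈ {1,...,r} and i ∈ {0,1}. Suppose the sequence does not have the uniqueness property, i.e., every value attained by the sequence is attained at least twice. Then there exists a function κ : {1,...,r} → {0,1} such that the set {q_j(κ(j)) : j ∈ {1,...,r}}, the set {q_j(1−κ(j)) : j ∈ {1,...,r}}, and the set of all values {q_j(i) : j ∈ {1,...,r}, i ∈ {0,1}} are all equal. -/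
/-!
Read `q j 0`, `q j 1` as the endpoints of edge `j` of a multigraph; the hypothesis says that
every vertex has degree at least two, and `κ j` orients edge `j` towards `q j (κ j)`. We show
by induction on the number of edges that some orientation gives every vertex an incoming and
an outgoing edge. If all edges are loops, any orientation does. Otherwise contract a non-loop
edge `uv`: the merged vertex still has degree at least two, and an orientation of the
contracted graph extends to one of the original graph by orienting `uv` so that it supplies
whichever of `u`, `v` lacks an in- or out-edge.
-/

theorem Fin.eq_or_eq_one_sub (i k : Fin 2) : i = k ∨ i = 1 - k := by
  revert i k; decide

theorem Fin.ne_one_sub (i : Fin 2) : i ≠ 1 - i := by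
  revert i; decide

theorem Fin.injective_of_apply_zero_ne_apply_one {β : Type*} {f : Fin 2 → β} (h : f 0 ≠ f 1) :
    Function.Injective f := by
  intro a b hab
  fin_cases a <;> fin_cases b <;> simp_all [eq_comm]

namespace EdgeOrientation

variable {ι α : Type*}

def heads (q : ι → Fin 2 → α) (κ : ι → Fin 2) : Set α := Set.range fun j => q j (κ j)

def tails (q : ι → Fin 2 → α) (κ : ι → Fin 2) : Set α :=
  Set.range fun j => q j (1 - κ j)

def NoUniqueValue (q : ι → Fin 2 → α) : Prop :=
  ∀ j i, ∃ j' i', (j', i') ≠ (j, i) ∧ q j' i' = q j i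

def IsHeadTailCover (q : ι → Fin 2 → α) (κ : ι → Fin 2) : Prop :=
  ∀ j i, q j i ∈ heads q κ ∧ q j i ∈ tails q κ

theorem mem_heads_or_mem_tails (q : ι → Fin 2 → α) (κ : ι → Fin 2) (j : ι) (i : Fin 2) :
    q j i ∈ heads q κ ∨ q j i ∈ tails q κ := by
  rcases i.eq_or_eq_one_sub (κ j) with rfl | rfl
  exacts [Or.inl ⟨j, rfl⟩, Or.inr ⟨j, rfl⟩]

theorem isHeadTailCover_of_forall_loop {q : ι → Fin 2 → α} (h : ∀ j, q j 0 = q j 1)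
    (κ : ι → Fin 2) : IsHeadTailCover q κ := by
  have hconst : ∀ j i i', q j i = q j i' := by
    intro j i i'
    fin_cases i <;> fin_cases i' <;> simp [h]
  exact fun j i => ⟨⟨j, hconst j _ _⟩, ⟨j, hconst j _ _⟩⟩

theorem IsHeadTailCover.heads_eq_and_tails_eq {q : ι → Fin 2 → α} {κ : ι → Fin 2}
    (h : IsHeadTailCover q κ) :
    heads q κ = {x | ∃ j i, q j i = x} ∧ tails q κ = {x | ∃ j i, q j i = x} := by
  refine ⟨subset_antisymm ?_ ?_, subset_antisymm ?_ ?_⟩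
  · rintro _ ⟨j, rfl⟩; exact ⟨j, _, rfl⟩
  · rintro _ ⟨j, i, rfl⟩; exact (h j i).1
  · rintro _ ⟨j, rfl⟩; exact ⟨j, _, rfl⟩
  · rintro _ ⟨j, i, rfl⟩; exact (h j i).2

variable {j₀ : ι}

def deleteEdge (q : ι → Fin 2 → α) (j₀ : ι) : {j // j ≠ j₀} → Fin 2 → α :=
  fun j => q j

@[simp]
theorem deleteEdge_apply (q : ι → Fin 2 → α) (j : {j // j ≠ j₀}) :
    deleteEdge q j₀ j = q j :=
  rfl

theorem heads_dite [DecidableEq ι] (q : ι → Fin 2 → α) (c : Fin 2)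
    (κ' : {j // j ≠ j₀} → Fin 2) :
    heads q (fun j => if h : j = j₀ then c else κ' ⟨j, h⟩) =
      insert (q j₀ c) (heads (deleteEdge q j₀) κ') := by
  ext x
  simp only [heads, deleteEdge_apply, Set.mem_range, Set.mem_insert_iff]
  constructor
  · rintro ⟨j, rfl⟩
    by_cases h : j = j₀
    · subst h; simp
    · exact Or.inr ⟨⟨j, h⟩, by simp [h]⟩
  · rintro (rfl | ⟨k, rfl⟩)
    exacts [⟨j₀, by simp⟩, ⟨k, by simp [k.2]⟩]

theorem tails_dite [DecidableEq ι] (q : ι → Fin 2 → α) (c : Fin 2)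
    (κ' : {j // j ≠ j₀} → Fin 2) :
    tails q (fun j => if h : j = j₀ then c else κ' ⟨j, h⟩) =
      insert (q j₀ (1 - c)) (tails (deleteEdge q j₀) κ') := by
  have flip : tails q (fun j => if h : j = j₀ then c else κ' ⟨j, h⟩) =
      heads q (fun j => if h : j = j₀ then 1 - c else 1 - κ' ⟨j, h⟩) := by
    unfold tails heads
    congr! 2 with j
    dsimp only
    split_ifs <;> rfl
  exact flip.trans (heads_dite q (1 - c) fun j => 1 - κ' j)

variable {q : ι → Fin 2 → α}

theorem exists_other_edge (hq : NoUniqueValue q) (h₀ : q j₀ 0 ≠ q j₀ 1) (i : Fin 2) :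
    ∃ (j : {j // j ≠ j₀}) (i' : Fin 2), deleteEdge q j₀ j i' = q j₀ i := by
  obtain ⟨j, i', hne, heq⟩ := hq j₀ i
  by_cases hj : j = j₀
  · subst hj
    exact absurd (by rw [Fin.injective_of_apply_zero_ne_apply_one h₀ heq]) hne
  · exact ⟨⟨j, hj⟩, i', heq⟩

section Contraction

variable [DecidableEq α]

def merge (u v x : α) : α := if x = v then u else x

theorem merge_of_ne {u v x : α} (hv : x ≠ v) : merge u v x = x := if_neg hv

theorem merge_eq_left_iff {u v x : α} : merge u v x = u ↔ x = u ∨ x = v := by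
  unfold merge; split_ifs <;> simp_all

theorem eq_of_merge_eq {u v x y : α} (hx : x ≠ u) (h : merge u v y = x) : y = x := by
  unfold merge at h; split_ifs at h <;> simp_all

theorem mem_of_mem_merge_image {u v x : α} {S : Set α} (hu : x ≠ u) (hv : x ≠ v)
    (h : merge u v x ∈ merge u v '' S) : x ∈ S := by
  obtain ⟨y, hy, hyx⟩ := h
  rwa [eq_of_merge_eq hu (hyx.trans (merge_of_ne hv))] at hy

theorem left_mem_of_mem_merge_image {u v : α} {S : Set α} (h : u ∈ merge u v '' S) :
    u ∈ S ∨ v ∈ S := by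
  obtain ⟨y, hy, hyu⟩ := h
  rcases merge_eq_left_iff.1 hyu with rfl | rfl
  exacts [Or.inl hy, Or.inr hy]

def contract (q : ι → Fin 2 → α) (j₀ : ι) : {j // j ≠ j₀} → Fin 2 → α :=
  fun j i => merge (q j₀ 0) (q j₀ 1) (deleteEdge q j₀ j i)

theorem heads_contract (κ' : {j // j ≠ j₀} → Fin 2) :
    heads (contract q j₀) κ' = merge (q j₀ 0) (q j₀ 1) '' heads (deleteEdge q j₀) κ' :=
  Set.range_comp _ _

theorem tails_contract (κ' : {j // j ≠ j₀} → Fin 2) :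
    tails (contract q j₀) κ' = merge (q j₀ 0) (q j₀ 1) '' tails (deleteEdge q j₀) κ' :=
  Set.range_comp _ _

theorem merge_endpoint (j₀ : ι) (i : Fin 2) :
    merge (q j₀ 0) (q j₀ 1) (q j₀ i) = q j₀ 0 :=
  merge_eq_left_iff.2 (by fin_cases i <;> simp)

theorem noUniqueValue_contract (hq : NoUniqueValue q) (h₀ : q j₀ 0 ≠ q j₀ 1) :
    NoUniqueValue (contract q j₀) := by
  rintro ⟨j, hj⟩ i
  obtain ⟨j', i', hne, heq⟩ := hq j i
  by_cases hj' : j' = j₀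
  · rw [hj'] at heq
    -- the partner of `(j, i)` lies on the contracted edge: use the other endpoint's partner
    obtain ⟨k, i'', hk⟩ := exists_other_edge hq h₀ (1 - i')
    refine ⟨k, i'', fun h => ?_, ?_⟩
    · obtain ⟨rfl, rfl⟩ := Prod.mk.inj h
      exact i'.ne_one_sub (Fin.injective_of_apply_zero_ne_apply_one h₀ (heq.trans hk))
    · simp only [contract, hk, deleteEdge_apply, ← heq, merge_endpoint]
  · refine ⟨⟨j', hj'⟩, i', fun h => hne ?_, by simp only [contract, deleteEdge_apply, heq]⟩
    obtain ⟨h1, h2⟩ := Prod.mk.inj h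
    exact Prod.ext (congrArg Subtype.val h1) h2

variable {κ' : {j // j ≠ j₀} → Fin 2}

theorem mem_heads_and_mem_tails_deleteEdge_of_contract
    (hκ' : IsHeadTailCover (contract q j₀) κ') {j : ι} {i : Fin 2}
    (hu : q j i ≠ q j₀ 0) (hv : q j i ≠ q j₀ 1) :
    q j i ∈ heads (deleteEdge q j₀) κ' ∧ q j i ∈ tails (deleteEdge q j₀) κ' := by
  have hj : j ≠ j₀ := by rintro rfl; fin_cases i <;> simp_all
  have := hκ' ⟨j, hj⟩ i
  rw [heads_contract, tails_contract] at this
  exact ⟨mem_of_mem_merge_image hu hv this.1, mem_of_mem_merge_image hu hv this.2⟩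

theorem exists_endpoints_mem_deleteEdge_of_contract (hq : NoUniqueValue q)
    (h₀ : q j₀ 0 ≠ q j₀ 1) (hκ' : IsHeadTailCover (contract q j₀) κ') :
    ∃ c, q j₀ (1 - c) ∈ heads (deleteEdge q j₀) κ' ∧
      q j₀ c ∈ tails (deleteEdge q j₀) κ' := by
  set H := heads (deleteEdge q j₀) κ'
  set T := tails (deleteEdge q j₀) κ'
  have endpoint : ∀ i, (q j₀ 0 ∈ H ∨ q j₀ 1 ∈ H) ∧
      (q j₀ 0 ∈ T ∨ q j₀ 1 ∈ T) ∧ (q j₀ i ∈ H ∨ q j₀ i ∈ T) := by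
    intro i
    obtain ⟨k, i', hk⟩ := exists_other_edge hq h₀ i
    have hmerge : contract q j₀ k i' = q j₀ 0 := by
      simp only [contract, hk, merge_endpoint]
    have := hκ' k i'
    rw [heads_contract, tails_contract, hmerge] at this
    exact ⟨left_mem_of_mem_merge_image this.1, left_mem_of_mem_merge_image this.2,
      hk ▸ mem_heads_or_mem_tails _ κ' k i'⟩
  have h0 := endpoint 0
  have h1 := endpoint 1
  have : (q j₀ 1 ∈ H ∧ q j₀ 0 ∈ T) ∨ (q j₀ 0 ∈ H ∧ q j₀ 1 ∈ T) := by tauto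
  rcases this with h | h
  exacts [⟨0, h⟩, ⟨1, h⟩]

theorem exists_isHeadTailCover_of_contract (hq : NoUniqueValue q) (h₀ : q j₀ 0 ≠ q j₀ 1)
    (hκ' : IsHeadTailCover (contract q j₀) κ') : ∃ κ, IsHeadTailCover q κ := by
  classical
  obtain ⟨c, hH, hT⟩ := exists_endpoints_mem_deleteEdge_of_contract hq h₀ hκ'
  refine ⟨fun j => if h : j = j₀ then c else κ' ⟨j, h⟩, fun j i => ?_⟩
  rw [heads_dite, tails_dite]
  by_cases hc : q j i = q j₀ c
  · exact ⟨Or.inl hc, Or.inr (hc ▸ hT)⟩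
  by_cases hc' : q j i = q j₀ (1 - c)
  · exact ⟨Or.inr (hc' ▸ hH), Or.inl hc'⟩
  have hends : ∀ i', q j i ≠ q j₀ i' := fun i' h => by
    rcases i'.eq_or_eq_one_sub c with rfl | rfl <;> contradiction
  have := mem_heads_and_mem_tails_deleteEdge_of_contract hκ' (hends 0) (hends 1)
  exact ⟨Or.inr this.1, Or.inr this.2⟩

end Contraction

theorem exists_isHeadTailCover [Finite ι] (q : ι → Fin 2 → α) (hq : NoUniqueValue q) :
    ∃ κ, IsHeadTailCover q κ := by
  classical
  induction hn : Nat.card ι using Nat.strong_induction_on generalizing ι with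
  | _ n ih =>
  by_cases hloop : ∀ j, q j 0 = q j 1
  · exact ⟨0, isHeadTailCover_of_forall_loop hloop 0⟩
  push Not at hloop
  obtain ⟨j₀, h₀⟩ := hloop
  obtain ⟨κ', hκ'⟩ := ih _ (hn ▸ Finite.card_subtype_lt (not_not.2 rfl)) (contract q j₀)
    (noUniqueValue_contract hq h₀) rfl
  exact exists_isHeadTailCover_of_contract hq h₀ hκ'

end EdgeOrientation

open EdgeOrientation in
theorem exists_choice_of_not_unique_general {α : Type*} (r : ℕ)
    (q : Fin r → Fin 2 → α)
    (h : ∀ j i, ∃ j' i', (j', i') ≠ (j, i) ∧ q j' i' = q j i) :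
    ∃ κ : Fin r → Fin 2,
      Set.range (fun j => q j (κ j)) = Set.range (fun j => q j (1 - κ j)) ∧
      Set.range (fun j => q j (κ j)) = {x | ∃ j i, q j i = x} := by
  obtain ⟨κ, hκ⟩ := exists_isHeadTailCover q h
  obtain ⟨hheads, htails⟩ := hκ.heads_eq_and_tails_eq
  exact ⟨κ, hheads.trans htails.symm, hheads⟩

/-- Hall-type matching lemma: if the sequence `(q j i)_{j ∈ Fin r, i ∈ Fin 2}` does not
have the uniqueness property (every value is attained at least twice), then there is a
choice function `κ : Fin r → Fin 2` such that the values `q j (κ j)`, the values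
`q j (1 - κ j)`, and all values `q j i` form the same set. -/
theorem exists_choice_of_not_unique {α : Type*} (r : ℕ) (hr : 1 ≤ r)
    (q : Fin r → Fin 2 → α)
    (h : ∀ j i, ∃ j' i', (j', i') ≠ (j, i) ∧ q j' i' = q j i) :
    ∃ κ : Fin r → Fin 2,
      Set.range (fun j => q j (κ j)) = Set.range (fun j => q j (1 - κ j)) ∧
      Set.range (fun j => q j (κ j)) = {x | ∃ j i, q j i = x} :=
  exists_choice_of_not_unique_general r q h
end

section
/- For every k ≥ 2 and every finite set V with |V| ≥ k, there exists a natural number r with r ≤ C_k · log|V| (for a constant C_k depending only on k, one may take r = ⌈(k^{k+1}/k!)·ln|V|⌉) and functions f₁, ..., f_r : V → {1,...,k} such that for every subset E ⊆ V with |E| = k there exists an index i ∈ {1,...,r} with |f_i(E)| = k, i.e., f_i is injective on E. -/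
/-!
A uniformly random `g : V → Fin k` is injective on a fixed `k`-set with probability
`p = k! / k^k`, so `r` independent ones all fail on it with probability
`(1 - p)^r ≤ exp (-p r)`. A union bound over the `C(n, k) ≤ n^k` sets of size `k` leaves a
good family as soon as `k log n < p r`, i.e. for `r = ⌊(k^(k+1) / k!) log n⌋ + 1`.
Probabilities are replaced by counts throughout.
-/

open Finset

section Counting

variable {β γ : Type*} [Fintype β] [DecidableEq β] [Fintype γ] [DecidableEq γ]

theorem card_not_injOn (s : Finset β) :
    #{g : β → γ | ¬ Set.InjOn g s} =
      (Fintype.card γ ^ #s - (Fintype.card γ).descFactorial #s) *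
        Fintype.card γ ^ (Fintype.card β - #s) := by
  let e : {g : β → γ // ¬ Set.InjOn g s} ≃
      {h : s → γ // ¬ Function.Injective h} × ({x // x ∉ s} → γ) :=
    ((Equiv.piEquivPiSubtypeProd (· ∈ s) fun _ => γ).subtypeEquiv fun g => by
      rw [Set.injOn_iff_injective]; rfl).trans Equiv.prodSubtypeFstEquivSubtypeProd
  rw [← Fintype.card_subtype, Fintype.card_congr e, Fintype.card_prod,
    Fintype.card_subtype_compl, Fintype.card_congr (Equiv.subtypeInjectiveEquivEmbedding _ _),
    Fintype.card_embedding_eq, Fintype.card_fun, Fintype.card_fun, Fintype.card_subtype_compl,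
    Fintype.card_coe]

theorem exists_forall_exists_of_card_mul_pow_lt {ι X : Type*} [Fintype X] [DecidableEq X]
    (T : Finset ι) (P : ι → X → Prop) [∀ t, DecidablePred (P t)] {b r : ℕ}
    (hb : ∀ t ∈ T, #{x | ¬ P t x} ≤ b) (hr : #T * b ^ r < Fintype.card X ^ r) :
    ∃ F : Fin r → X, ∀ t ∈ T, ∃ i, P t (F i) := by
  by_contra! hbad
  have hcover : (univ : Finset (Fin r → X)) ⊆
      T.biUnion fun t => Fintype.piFinset fun _ => {x | ¬ P t x} := by
    intro F _
    obtain ⟨t, ht, hF⟩ := hbad F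
    simpa [Fintype.mem_piFinset] using ⟨t, ht, hF⟩
  have hle := calc Fintype.card X ^ r
      = #(univ : Finset (Fin r → X)) := by simp
    _ ≤ ∑ t ∈ T, #(Fintype.piFinset fun _ : Fin r => ({x | ¬ P t x} : Finset X)) :=
      (card_le_card hcover).trans card_biUnion_le
    _ ≤ ∑ t ∈ T, b ^ r := sum_le_sum fun t ht => by
      rw [Fintype.card_piFinset, prod_const, card_univ, Fintype.card_fin]
      exact Nat.pow_le_pow_left (hb t ht) r
    _ = #T * b ^ r := by rw [sum_const, smul_eq_mul]
  exact hle.not_gt hr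

theorem exists_injOn_family_of_choose_mul_pow_lt [Nonempty γ] {k r : ℕ}
    (hk : k ≤ Fintype.card β)
    (hr : (Fintype.card β).choose k *
        (Fintype.card γ ^ k - (Fintype.card γ).descFactorial k) ^ r < (Fintype.card γ ^ k) ^ r) :
    ∃ F : Fin r → β → γ, ∀ s : Finset β, #s = k → ∃ i, Set.InjOn (F i) s := by
  set m := Fintype.card γ
  set n := Fintype.card β
  have hbad : ∀ s ∈ powersetCard k (univ : Finset β),
      #{g : β → γ | ¬ Set.InjOn g s} ≤ (m ^ k - m.descFactorial k) * m ^ (n - k) := by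
    intro s hs
    rw [card_not_injOn, (mem_powersetCard.mp hs).2]
  have hpos : 0 < (m ^ (n - k)) ^ r := by positivity
  obtain ⟨F, hF⟩ := exists_forall_exists_of_card_mul_pow_lt _ _ hbad <| by
    have hsplit : (m ^ n) ^ r = (m ^ k) ^ r * (m ^ (n - k)) ^ r := by
      rw [← mul_pow, ← pow_add, Nat.add_sub_cancel' hk]
    rw [card_powersetCard, card_univ, Fintype.card_fun, hsplit, mul_pow, ← mul_assoc]
    exact Nat.mul_lt_mul_of_pos_right hr hpos
  exact ⟨F, fun s hs => hF s (mem_powersetCard.mpr ⟨subset_univ s, hs⟩)⟩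

end Counting

theorem mul_one_sub_pow_lt_one {N p : ℝ} (hN : 0 < N) (hp : p ≤ 1) {r : ℕ}
    (hr : Real.log N < p * r) : N * (1 - p) ^ r < 1 := by
  calc N * (1 - p) ^ r ≤ Real.exp (Real.log N) * Real.exp (-p) ^ r := by
        rw [Real.exp_log hN]
        gcongr
        exact Real.one_sub_le_exp_neg p
    _ = Real.exp (Real.log N - p * r) := by
        rw [← Real.exp_nat_mul, ← Real.exp_add]; ring_nf
    _ < 1 := Real.exp_lt_one_iff.mpr (by linarith)

theorem choose_mul_pow_sub_factorial_lt {n k r : ℕ} (hn : 0 < n)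
    (hr : (k ^ (k + 1) / k.factorial : ℝ) * Real.log n < r) :
    n.choose k * (k ^ k - k.factorial) ^ r < (k ^ k) ^ r := by
  have hkk : (0 : ℝ) < k ^ k := by exact_mod_cast Nat.pow_self_pos
  set p : ℝ := k.factorial / k ^ k with hp_def
  have hp : p ≤ 1 := div_le_one_of_le₀ (by exact_mod_cast Nat.factorial_le_pow k) hkk.le
  have hsmall : (n : ℝ) ^ k * (1 - p) ^ r < 1 := by
    refine mul_one_sub_pow_lt_one (by positivity) hp ?_
    have hp0 : 0 < p := by positivity
    calc Real.log (n ^ k) = p * ((k ^ (k + 1) / k.factorial : ℝ) * Real.log n) := by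
          rw [Real.log_pow, hp_def]; field_simp; ring
      _ < p * r := by gcongr
  have hsub : ((k ^ k - k.factorial : ℕ) : ℝ) = k ^ k * (1 - p) := by
    rw [Nat.cast_sub (Nat.factorial_le_pow k), mul_one_sub, mul_div_cancel₀ _ hkk.ne']
    push_cast
    rfl
  rw [← Nat.cast_lt (α := ℝ)]
  calc ((n.choose k * (k ^ k - k.factorial) ^ r : ℕ) : ℝ)
      = (n.choose k : ℝ) * (1 - p) ^ r * (k ^ k) ^ r := by
        rw [Nat.cast_mul, Nat.cast_pow, hsub, mul_pow]; ring
    _ ≤ (n : ℝ) ^ k * (1 - p) ^ r * (k ^ k) ^ r := by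
      gcongr
      exact_mod_cast Nat.choose_le_pow n k
    _ < 1 * (k ^ k) ^ r := by gcongr
    _ = ((k ^ k) ^ r : ℕ) := by push_cast; ring

theorem Set.InjOn.dite_of_subtype {α β : Type*} [DecidableEq α] {V E : Finset α} (hEV : E ⊆ V)
    {g : V → β} (d : β) (hg : Set.InjOn g (E.subtype (· ∈ V))) :
    Set.InjOn (fun a => if h : a ∈ V then g ⟨a, h⟩ else d) E := by
  intro a ha b hb hab
  dsimp only at hab
  rw [dif_pos (hEV ha), dif_pos (hEV hb)] at hab
  exact congrArg Subtype.val (hg (by simpa using ha) (by simpa using hb) hab)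

/-- For every `k ≥ 2` there is a constant `C = C k` (one may take
`r = ⌈(k^{k+1}/k!)·ln |V|⌉`) such that for every finite set `V` with `|V| ≥ k`
there are `r ≤ C · log |V|` functions `f₁, …, f_r : V → {1,…,k}` such that every
`k`-element subset `E ⊆ V` is mapped injectively by some `f_i`. -/
theorem exists_separating_functions (k : ℕ) (hk : 2 ≤ k) :
    ∃ C : ℝ, 0 < C ∧
      ∀ (α : Type) (V : Finset α), k ≤ V.card →
        ∃ (r : ℕ) (f : Fin r → α → Fin k),
          (r : ℝ) ≤ C * Real.log V.card ∧
          ∀ E : Finset α, E ⊆ V → E.card = k →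
            ∃ i : Fin r, Set.InjOn (f i) E := by
  classical
  have : NeZero k := ⟨by omega⟩
  set A : ℝ := k ^ (k + 1) / k.factorial
  have hlog2 : 0 < Real.log 2 := Real.log_pos one_lt_two
  refine ⟨A + 1 / Real.log 2, by positivity, fun α V hV => ?_⟩
  have hlog : Real.log 2 ≤ Real.log V.card :=
    Real.log_le_log two_pos (by exact_mod_cast hk.trans hV)
  set r := ⌊A * Real.log V.card⌋₊ + 1
  have hr : (r : ℝ) ≤ (A + 1 / Real.log 2) * Real.log V.card := by
    have hfloor := Nat.floor_le (show 0 ≤ A * Real.log V.card by positivity)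
    have hone : 1 ≤ 1 / Real.log 2 * Real.log V.card := by
      rw [one_div_mul_eq_div, one_le_div hlog2]; exact hlog
    push_cast [r]
    linarith
  have hcount : V.card.choose k * (k ^ k - k.factorial) ^ r < (k ^ k) ^ r :=
    choose_mul_pow_sub_factorial_lt (by omega) (by push_cast [r]; exact Nat.lt_floor_add_one _)
  obtain ⟨F, hF⟩ := exists_injOn_family_of_choose_mul_pow_lt (β := V) (γ := Fin k)
    (by simpa using hV) (by simpa [Nat.descFactorial_self] using hcount)
  refine ⟨r, fun i a => if h : a ∈ V then F i ⟨a, h⟩ else 0, hr,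
    fun E hEV hEk => ?_⟩
  obtain ⟨i, hi⟩ := hF (E.subtype (· ∈ V)) <| by
    rw [card_subtype, filter_true_of_mem fun _ h => hEV h, hEk]
  exact ⟨i, hi.dite_of_subtype hEV _⟩
end

section
/- For every n, r ∈ ℕ with r ≥ 1 and arbitrary nonnegative real numbers a₁, ..., a_n, one has (a₁ + ... + a_n)^r ≤ (r(r−1))^{r−1} · Σ_{i=1}^n a_i^r + 2 · Σ a_{i₁}⋯a_{i_r}, where the second sum ranges over all r-tuples (i₁,...,i_r) of pairwise distinct indices in {1,...,n}. -/
open Finset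

/-! Expand `S ^ r = (∑ a) ^ r` as the sum of `∏ j, a (σ j)` over all `σ : Fin r → Fin n` and
split it into the injective part `T` and the rest `N`. If `S ^ r ≤ 2 T` we are done. Otherwise
`S ^ r < 2 N`. A non-injective `σ` agrees on at least two ordered pairs of distinct positions, and
the tuples agreeing on a fixed pair contribute `(∑ a²) S ^ (r - 2)`, so double counting over the
`r (r - 1)` ordered pairs gives `S ^ 2 ≤ r (r - 1) ∑ a²`. By Jensen (log-convexity of power sums)
`(∑ a²) ^ (r - 1) ≤ S ^ (r - 2) ∑ a ^ r`, and together `S ^ r ≤ (r (r - 1)) ^ (r - 1) ∑ a ^ r`. -/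

theorem pow_sum_sq_le_pow_sum_mul_sum_pow {ι : Type*} (s : Finset ι) {a : ι → ℝ}
    (ha : ∀ i ∈ s, 0 ≤ a i) (m : ℕ) :
    (∑ i ∈ s, a i ^ 2) ^ (m + 1) ≤ (∑ i ∈ s, a i) ^ m * ∑ i ∈ s, a i ^ (m + 2) := by
  set S := ∑ i ∈ s, a i
  rcases (sum_nonneg ha).eq_or_lt with hS | hS
  · have hzero : ∀ i ∈ s, a i = 0 := (sum_eq_zero_iff_of_nonneg ha).1 hS.symm
    rw [sum_eq_zero fun i hi => by simp [hzero i hi], zero_pow m.succ_ne_zero]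
    exact mul_nonneg (pow_nonneg hS.le m) (sum_nonneg fun i hi => pow_nonneg (ha i hi) _)
  -- Jensen for `x ↦ x ^ (m + 1)` with the weights `a i / S`
  have hjensen := Real.pow_arith_mean_le_arith_mean_pow s (fun i => a i / S) a
    (fun i hi => div_nonneg (ha i hi) hS.le) (by rw [← sum_div, div_self hS.ne']) ha (m + 1)
  simp only [div_mul_eq_mul_div, ← sum_div, ← sq, ← pow_succ', div_pow] at hjensen
  rw [div_le_div_iff₀ (by positivity) hS, pow_succ S m, ← mul_assoc, mul_comm _ (S ^ m)]
    at hjensen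
  exact le_of_mul_le_mul_right hjensen hS

theorem sum_prod_filter_apply_eq {ι α R : Type*} [Fintype ι] [DecidableEq ι] [Fintype α]
    [DecidableEq α] [CommSemiring R] (f : α → R) {j k : ι} (hjk : j ≠ k) :
    ∑ σ ∈ univ.filter (fun σ : ι → α => σ j = σ k), ∏ m, f (σ m) =
      (∑ x, f x ^ 2) * (∑ x, f x) ^ (Fintype.card ι - 2) := by
  set t : α → ι → Finset α := fun x => ({j, k} : Finset ι).piecewise (fun _ => {x}) fun _ => univ
  have hfiber : ∀ x, (univ.filter fun σ : ι → α => σ j = σ k).filter (fun σ => σ j = x) =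
      Fintype.piFinset (t x) := by
    intro x
    ext σ
    simp only [mem_filter, mem_univ, true_and, Fintype.mem_piFinset, t]
    constructor
    · rintro ⟨hσ, rfl⟩ m
      by_cases hm : m ∈ ({j, k} : Finset ι)
      · rw [piecewise_eq_of_mem _ _ _ hm]
        rcases mem_insert.1 hm with rfl | hm <;> simp_all
      · simp [piecewise_eq_of_notMem _ _ _ hm]
    · intro h
      have hj := h j
      have hk := h k
      simp only [piecewise, mem_insert, mem_singleton, true_or, or_true, if_true] at hj hk
      exact ⟨hj.trans hk.symm, hj⟩
  have hinner : ∀ x, ∑ σ ∈ Fintype.piFinset (t x), ∏ m, f (σ m) =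
      f x ^ 2 * (∑ y, f y) ^ (Fintype.card ι - 2) := by
    intro x
    have hfactor : ∀ m, ∑ y ∈ t x m, f y =
        ({j, k} : Finset ι).piecewise (fun _ => f x) (fun _ => ∑ y, f y) m := fun m => by
      simp only [t, piecewise]
      split_ifs <;> simp
    rw [← prod_univ_sum, prod_congr rfl fun m _ => hfactor m, prod_piecewise, univ_inter,
      prod_const, prod_const, card_pair hjk, ← compl_eq_univ_sdiff, card_compl, card_pair hjk]
  rw [← sum_fiberwise_of_maps_to (g := fun σ : ι → α => σ j) (t := univ) (fun _ _ => mem_univ _)]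
  simp only [hfiber, hinner, sum_mul]

theorem two_le_card_filter_offDiag_of_not_injective {ι α : Type*} [Fintype ι] [DecidableEq ι]
    [DecidableEq α] {σ : ι → α} (hσ : ¬ Function.Injective σ) :
    2 ≤ (univ.offDiag.filter fun q : ι × ι => σ q.1 = σ q.2).card := by
  obtain ⟨x, y, hxy, hne⟩ := Function.not_injective_iff.1 hσ
  calc 2 = ({(x, y), (y, x)} : Finset (ι × ι)).card := by simp [hne]
    _ ≤ _ := card_le_card <| by simp [insert_subset_iff, hxy, hne, hne.symm]

theorem two_mul_sum_prod_not_injective_le {ι α : Type*} [Fintype ι] [DecidableEq ι] [Fintype α]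
    [DecidableEq α] {f : α → ℝ} (hf : ∀ x, 0 ≤ f x) :
    2 * ∑ σ ∈ univ.filter (fun σ : ι → α => ¬ Function.Injective σ), ∏ m, f (σ m) ≤
      ((Fintype.card ι * (Fintype.card ι - 1) : ℕ) : ℝ) *
        ((∑ x, f x ^ 2) * (∑ x, f x) ^ (Fintype.card ι - 2)) := by
  set P : Finset (ι × ι) := univ.offDiag
  set F : (ι → α) → ℝ := fun σ => ∏ m, f (σ m)
  have hF : ∀ σ, 0 ≤ F σ := fun σ => prod_nonneg fun m _ => hf (σ m)
  calc 2 * ∑ σ ∈ univ.filter (fun σ : ι → α => ¬ Function.Injective σ), F σ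
      ≤ ∑ σ ∈ univ.filter (fun σ : ι → α => ¬ Function.Injective σ),
          ((P.filter fun q => σ q.1 = σ q.2).card : ℝ) * F σ := by
        rw [mul_sum]
        refine sum_le_sum fun σ hσ => mul_le_mul_of_nonneg_right ?_ (hF σ)
        exact_mod_cast two_le_card_filter_offDiag_of_not_injective (mem_filter.1 hσ).2
    _ ≤ ∑ σ, ((P.filter fun q => σ q.1 = σ q.2).card : ℝ) * F σ :=
        sum_le_sum_of_subset_of_nonneg (filter_subset _ _)
          fun σ _ _ => mul_nonneg (Nat.cast_nonneg _) (hF σ)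
    _ = ∑ q ∈ P, ∑ σ ∈ univ.filter (fun σ : ι → α => σ q.1 = σ q.2), F σ := by
        simp only [card_filter, Nat.cast_sum, sum_mul, Nat.cast_ite, Nat.cast_one,
          Nat.cast_zero, ite_mul, one_mul, zero_mul, sum_filter]
        exact sum_comm
    _ = ((Fintype.card ι * (Fintype.card ι - 1) : ℕ) : ℝ) *
          ((∑ x, f x ^ 2) * (∑ x, f x) ^ (Fintype.card ι - 2)) := by
        rw [sum_congr rfl fun q hq => sum_prod_filter_apply_eq f (mem_offDiag.1 hq).2.2,
          sum_const, nsmul_eq_mul, offDiag_card, card_univ, Nat.mul_sub_one]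

theorem pow_le_pow_mul_of_sq_le {S Q D c : ℝ} (hS : 0 ≤ S) (hD : 0 ≤ D) (hc : 0 ≤ c) (m : ℕ)
    (hsq : S ^ (m + 2) ≤ c * (Q * S ^ m)) (hpow : Q ^ (m + 1) ≤ S ^ m * D) :
    S ^ (m + 2) ≤ c ^ (m + 1) * D := by
  rcases hS.eq_or_lt with rfl | hS
  · rw [zero_pow (by omega)]; positivity
  have hsq' : S ^ 2 ≤ c * Q := by
    refine le_of_mul_le_mul_left ?_ (pow_pos hS m)
    linear_combination hsq
  have key : S ^ m * S ^ (m + 2) ≤ S ^ m * (c ^ (m + 1) * D) := calc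
    S ^ m * S ^ (m + 2) = (S ^ 2) ^ (m + 1) := by ring
    _ ≤ (c * Q) ^ (m + 1) := pow_le_pow_left₀ (by positivity) hsq' _
    _ = c ^ (m + 1) * Q ^ (m + 1) := mul_pow c Q _
    _ ≤ c ^ (m + 1) * (S ^ m * D) := mul_le_mul_of_nonneg_left hpow (by positivity)
    _ = S ^ m * (c ^ (m + 1) * D) := by ring
  exact le_of_mul_le_mul_left key (pow_pos hS m)

theorem pow_sum_le_diag_add_offdiag_general (n r : ℕ)
    (a : Fin n → ℝ) (ha : ∀ i, 0 ≤ a i) :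
    (∑ i, a i) ^ r ≤
      ((r * (r - 1) : ℕ) : ℝ) ^ (r - 1) * ∑ i, a i ^ r +
      2 * ∑ σ ∈ Finset.univ.filter (fun σ : Fin r → Fin n => Function.Injective σ),
            ∏ j, a (σ j) := by
  set T := ∑ σ ∈ univ.filter (fun σ : Fin r → Fin n => Function.Injective σ), ∏ j, a (σ j)
  set N := ∑ σ ∈ univ.filter (fun σ : Fin r → Fin n => ¬ Function.Injective σ), ∏ j, a (σ j)
  have hsplit : (∑ i, a i) ^ r = T + N := by rw [Fintype.sum_pow, sum_filter_add_sum_filter_not]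
  have hT : 0 ≤ T := sum_nonneg fun σ _ => prod_nonneg fun j _ => ha (σ j)
  have hD : 0 ≤ ∑ i, a i ^ r := sum_nonneg fun i _ => pow_nonneg (ha i) r
  by_cases hinj : (∑ i, a i) ^ r ≤ 2 * T
  · exact hinj.trans (le_add_of_nonneg_left (mul_nonneg (by positivity) hD))
  have hN : (∑ i, a i) ^ r ≤ 2 * N := by linarith
  obtain ⟨m, rfl⟩ : ∃ m, r = m + 2 := by
    refine ⟨r - 2, (Nat.sub_add_cancel (not_lt.1 fun hr => ?_)).symm⟩
    have : Subsingleton (Fin r) := Fin.subsingleton_iff_le_one.2 (by omega)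
    have hN0 : N = 0 := by simp [N, Function.injective_of_subsingleton]
    linarith
  have hcollide := two_mul_sum_prod_not_injective_le (ι := Fin (m + 2)) ha
  rw [Fintype.card_fin] at hcollide
  exact le_add_of_le_of_nonneg
    (pow_le_pow_mul_of_sq_le (sum_nonneg fun i _ => ha i) hD (Nat.cast_nonneg _) m
      (hN.trans hcollide) (pow_sum_sq_le_pow_sum_mul_sum_pow univ (fun i _ => ha i) m))
    (mul_nonneg zero_le_two hT)

/-- For every `n, r ∈ ℕ` with `r ≥ 1` and nonnegative reals `a₁, …, a_n`:
`(a₁ + ⋯ + a_n)^r ≤ (r(r−1))^{r−1} Σ_i a_i^r + 2 Σ a_{i₁} ⋯ a_{i_r}`, where the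
second sum runs over all `r`-tuples of pairwise distinct indices. -/
theorem pow_sum_le_diag_add_offdiag (n r : ℕ) (hr : 1 ≤ r)
    (a : Fin n → ℝ) (ha : ∀ i, 0 ≤ a i) :
    (∑ i, a i) ^ r ≤
      ((r * (r - 1) : ℕ) : ℝ) ^ (r - 1) * ∑ i, a i ^ r +
      2 * ∑ σ ∈ Finset.univ.filter (fun σ : Fin r → Fin n => Function.Injective σ),
            ∏ j, a (σ j) :=
  pow_sum_le_diag_add_offdiag_general n r a ha
end

section
/- Let H be a separable Hilbert space and (r_n)_{n∈ℕ} the Rademacher functions on [0,1]. For every p ∈ (0,∞) there exist constants 0 < c_p ≤ C_p < ∞, independent of H, such that for every finitely supported sequence (b_n) in H: c_p (∫₀¹ ‖Σ_n r_n(t) b_n‖_H² dt)^{1/2} ≤ (∫₀¹ ‖Σ_n r_n(t) b_n‖_H^p dt)^{1/p} ≤ C_p (∫₀¹ ‖Σ_n r_n(t) b_n‖_H² dt)^{1/2}. -/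
open MeasureTheory

/-- The `n`-th Rademacher function on `[0,1]`. -/
noncomputable def rademacher (n : ℕ) (t : ℝ) : ℝ :=
  if Int.fract (2 ^ n * t) < 1 / 2 then 1 else -1

namespace KK

noncomputable def sgn (a : Bool) : ℝ := if a then 1 else -1

lemma sgn_mem (a : Bool) : sgn a = 1 ∨ sgn a = -1 := by cases a <;> simp [sgn]

noncomputable def cubeS {H : Type*} [AddCommGroup H] [Module ℝ H] (b : ℕ → H) (N : ℕ)
    (ε : Fin N → Bool) : H := ∑ n : Fin N, sgn (ε n) • b (n : ℕ)

lemma sum_cube_succ {M : Type*} [AddCommMonoid M] (N : ℕ) (f : (Fin (N + 1) → Bool) → M) :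
    ∑ ε : Fin (N + 1) → Bool, f ε
      = (∑ ε : Fin N → Bool, f (Fin.cons true ε))
        + ∑ ε : Fin N → Bool, f (Fin.cons false ε) := by
  rw [← Equiv.sum_comp (Fin.consEquiv fun _ : Fin (N + 1) => Bool) f, Fintype.sum_prod_type,
    Fintype.sum_bool]
  rfl

lemma cubeS_cons {H : Type*} [AddCommGroup H] [Module ℝ H] (b : ℕ → H) (N : ℕ) (a : Bool)
    (ε : Fin N → Bool) :
    cubeS b (N + 1) (Fin.cons a ε) = sgn a • b 0 + cubeS (fun n => b (n + 1)) N ε := by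
  simp [cubeS, Fin.sum_univ_succ]

lemma rademacher_succ (n : ℕ) (t : ℝ) : rademacher (n + 1) t = rademacher n (2 * t) := by
  unfold rademacher
  have : 2 ^ (n + 1) * t = 2 ^ n * (2 * t) := by ring
  rw [this]

lemma rademacher_sub_one (n : ℕ) (t : ℝ) : rademacher n (t - 1) = rademacher n t := by
  unfold rademacher
  have : 2 ^ n * (t - 1) = 2 ^ n * t - ((2 ^ n : ℤ) : ℝ) := by push_cast; ring
  rw [this, Int.fract_sub_intCast]

lemma rademacher_zero_of_lt_half {t : ℝ} (h0 : 0 ≤ t) (h : t < 1 / 2) : rademacher 0 t = 1 := by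
  unfold rademacher
  rw [pow_zero, one_mul, Int.fract_eq_self.2 ⟨h0, by linarith⟩, if_pos h]

lemma rademacher_zero_of_ge_half {t : ℝ} (h : 1 / 2 ≤ t) (h1 : t < 1) : rademacher 0 t = -1 := by
  unfold rademacher
  rw [pow_zero, one_mul, Int.fract_eq_self.2 ⟨by linarith, h1⟩, if_neg (by linarith)]

lemma measurable_rademacher (n : ℕ) : Measurable (rademacher n) := by
  unfold rademacher
  exact Measurable.ite
    (measurableSet_lt (measurable_fract.comp (measurable_id.const_mul _)) measurable_const)
    measurable_const measurable_const

lemma rademacher_eq_sgn (n : ℕ) (t : ℝ) :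
    rademacher n t = sgn (decide (rademacher n t = 1)) := by
  unfold rademacher sgn
  split <;> norm_num



section Meas

variable {H : Type*} [NormedAddCommGroup H] [InnerProductSpace ℝ H]
  [TopologicalSpace.SeparableSpace H]

lemma radsum_eq_cubeS (b : ℕ → H) (N : ℕ) (t : ℝ) :
    ∃ ε : Fin N → Bool, ∑ n ∈ Finset.range N, rademacher n t • b n = cubeS b N ε := by
  refine ⟨fun n => decide (rademacher (n : ℕ) t = 1), ?_⟩
  rw [Finset.sum_range fun n => rademacher n t • b n]
  exact Finset.sum_congr rfl fun n _ => by rw [← rademacher_eq_sgn]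

lemma measurable_radsum (b : ℕ → H) (N : ℕ) (G : H → ℝ) (hG : Continuous G) :
    Measurable fun t => G (∑ n ∈ Finset.range N, rademacher n t • b n) := by
  borelize H
  haveI : SecondCountableTopology H := UniformSpace.secondCountable_of_separable H
  refine hG.measurable.comp (Finset.measurable_sum _ fun n _ => ?_)
  exact (measurable_rademacher n).smul_const (b n)

lemma intervalIntegrable_radsum (b : ℕ → H) (N : ℕ) (G : H → ℝ) (hG : Continuous G)
    (a c : ℝ) :
    IntervalIntegrable (fun t => G (∑ n ∈ Finset.range N, rademacher n t • b n)) volume a c := by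
  rw [intervalIntegrable_iff]
  refine Integrable.mono' (g := fun _ => ∑ ε : Fin N → Bool, |G (cubeS b N ε)|)
    (integrableOn_const measure_Ioc_lt_top.ne)
    ((measurable_radsum b N G hG).aestronglyMeasurable.restrict) (ae_of_all _ fun t => ?_)
  obtain ⟨ε, hε⟩ := radsum_eq_cubeS b N t
  rw [Real.norm_eq_abs, hε]
  exact Finset.single_le_sum (f := fun ε => |G (cubeS b N ε)|)
    (fun _ _ => abs_nonneg _) (Finset.mem_univ ε)

lemma ae_ne_vol (a : ℝ) : ∀ᵐ x : ℝ, x ≠ a := by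
  rw [MeasureTheory.ae_iff]
  simpa using measure_singleton (μ := (volume : Measure ℝ)) a

lemma integral_radsum_eq_avg (G : H → ℝ) (hG : Continuous G) (b : ℕ → H) (N : ℕ) :
    ∫ t in (0:ℝ)..1, G (∑ n ∈ Finset.range N, rademacher n t • b n)
      = (2 ^ N : ℝ)⁻¹ * ∑ ε : Fin N → Bool, G (cubeS b N ε) := by
  induction N generalizing G b with
  | zero =>
    simp [cubeS]
  | succ N ih =>
    set b' : ℕ → H := fun n => b (n + 1) with hb'
    have key : ∀ t : ℝ, ∑ n ∈ Finset.range (N + 1), rademacher n t • b n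
        = rademacher 0 t • b 0 + ∑ n ∈ Finset.range N, rademacher n (2 * t) • b' n := by
      intro t
      rw [Finset.sum_range_succ' (fun n => rademacher n t • b n)]
      rw [add_comm]
      congr 1
      exact Finset.sum_congr rfl fun n _ => by rw [rademacher_succ]
    have h1 : ∫ t in (0:ℝ)..(1/2), G (∑ n ∈ Finset.range (N + 1), rademacher n t • b n)
        = 2⁻¹ * ((2 ^ N : ℝ)⁻¹ * ∑ ε : Fin N → Bool, G (b 0 + cubeS b' N ε)) := by
      have congr1 : ∫ t in (0:ℝ)..(1/2), G (∑ n ∈ Finset.range (N + 1), rademacher n t • b n)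
          = ∫ t in (0:ℝ)..(1/2),
              (fun s => G (b 0 + ∑ n ∈ Finset.range N, rademacher n s • b' n)) (2 * t) := by
        refine intervalIntegral.integral_congr_ae ?_
        filter_upwards [ae_ne_vol (1/2 : ℝ)] with t ht htI
        rw [Set.uIoc_of_le (by norm_num : (0:ℝ) ≤ 1/2)] at htI
        have h0 : 0 ≤ t := le_of_lt htI.1
        have hlt : t < 1/2 := lt_of_le_of_ne htI.2 ht
        rw [key t, rademacher_zero_of_lt_half h0 hlt, one_smul]
      rw [congr1, intervalIntegral.integral_comp_mul_left
        (fun s => G (b 0 + ∑ n ∈ Finset.range N, rademacher n s • b' n)) (two_ne_zero)]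
      norm_num
      rw [ih (fun x => G (b 0 + x)) (hG.comp (continuous_const.add continuous_id)) b']
    have h2 : ∫ t in (1/2:ℝ)..1, G (∑ n ∈ Finset.range (N + 1), rademacher n t • b n)
        = 2⁻¹ * ((2 ^ N : ℝ)⁻¹ * ∑ ε : Fin N → Bool, G (-b 0 + cubeS b' N ε)) := by
      have congr2 : ∫ t in (1/2:ℝ)..1, G (∑ n ∈ Finset.range (N + 1), rademacher n t • b n)
          = ∫ t in (1/2:ℝ)..1,
              (fun s => G (-b 0 + ∑ n ∈ Finset.range N, rademacher n (s - 1) • b' n))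
                (2 * t) := by
        refine intervalIntegral.integral_congr_ae ?_
        filter_upwards [ae_ne_vol (1:ℝ)] with t ht htI
        rw [Set.uIoc_of_le (by norm_num : (1/2:ℝ) ≤ 1)] at htI
        have hlt : t < 1 := lt_of_le_of_ne htI.2 ht
        have hge : 1/2 ≤ t := le_of_lt htI.1
        rw [key t, rademacher_zero_of_ge_half hge hlt, neg_one_smul]
        congr 2
        exact Finset.sum_congr rfl fun n _ => by rw [rademacher_sub_one]
      rw [congr2, intervalIntegral.integral_comp_mul_left
        (fun s => G (-b 0 + ∑ n ∈ Finset.range N, rademacher n (s - 1) • b' n)) (two_ne_zero)]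
      norm_num
      rw [intervalIntegral.integral_comp_sub_right
        (fun s => G (-b 0 + ∑ n ∈ Finset.range N, rademacher n s • b' n)) 1]
      norm_num
      rw [ih (fun x => G (-b 0 + x)) (hG.comp (continuous_const.add continuous_id)) b']
    have split := intervalIntegral.integral_add_adjacent_intervals
      (intervalIntegrable_radsum b (N+1) G hG 0 (1/2))
      (intervalIntegrable_radsum b (N+1) G hG (1/2) 1)
    rw [← split, h1, h2, sum_cube_succ N (fun ε => G (cubeS b (N+1) ε))]
    have e1 : ∀ ε : Fin N → Bool, cubeS b (N+1) (Fin.cons true ε) = b 0 + cubeS b' N ε := by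
      intro ε; rw [cubeS_cons]; simp [sgn, hb']
    have e2 : ∀ ε : Fin N → Bool, cubeS b (N+1) (Fin.cons false ε) = -b 0 + cubeS b' N ε := by
      intro ε; rw [cubeS_cons]; simp [sgn, hb']
    simp only [e1, e2]
    rw [pow_succ]
    ring

end Meas


open Finset

lemma card_cube (N : ℕ) : ((Finset.univ : Finset (Fin N → Bool)).card : ℝ) = 2 ^ N := by
  simp [Finset.card_univ, Fintype.card_fun]

lemma cubeS_cons_true {H : Type*} [AddCommGroup H] [Module ℝ H] (b : ℕ → H) (N : ℕ)
    (ε : Fin N → Bool) :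
    cubeS b (N + 1) (Fin.cons true ε) = b 0 + cubeS (fun n => b (n + 1)) N ε := by
  rw [cubeS_cons]; simp [sgn]

lemma cubeS_cons_false {H : Type*} [AddCommGroup H] [Module ℝ H] (b : ℕ → H) (N : ℕ)
    (ε : Fin N → Bool) :
    cubeS b (N + 1) (Fin.cons false ε) = -b 0 + cubeS (fun n => b (n + 1)) N ε := by
  rw [cubeS_cons]; simp [sgn]

lemma cube_exp_le (a : ℕ → ℝ) (N : ℕ) :
    ∑ ε : Fin N → Bool, Real.exp (cubeS a N ε)
      ≤ 2 ^ N * Real.exp (∑ n ∈ range N, a n ^ 2 / 2) := by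
  induction N generalizing a with
  | zero => simp [cubeS]
  | succ N ih =>
    rw [sum_cube_succ N (fun ε => Real.exp (cubeS a (N+1) ε))]
    have hterm : ∀ ε : Fin N → Bool,
        Real.exp (cubeS a (N+1) (Fin.cons true ε)) + Real.exp (cubeS a (N+1) (Fin.cons false ε))
          = (2 * Real.cosh (a 0)) * Real.exp (cubeS (fun n => a (n+1)) N ε) := by
      intro ε
      rw [cubeS_cons_true, cubeS_cons_false, Real.cosh_eq, Real.exp_add, Real.exp_add]
      ring
    rw [← Finset.sum_add_distrib]
    calc ∑ ε : Fin N → Bool, (Real.exp (cubeS a (N+1) (Fin.cons true ε))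
            + Real.exp (cubeS a (N+1) (Fin.cons false ε)))
        = (2 * Real.cosh (a 0)) * ∑ ε : Fin N → Bool, Real.exp (cubeS (fun n => a (n+1)) N ε) := by
          rw [Finset.mul_sum]; exact Finset.sum_congr rfl fun ε _ => hterm ε
      _ ≤ (2 * Real.exp (a 0 ^ 2 / 2)) * (2 ^ N * Real.exp (∑ n ∈ range N, a (n+1) ^ 2 / 2)) := by
          have h1 : (0:ℝ) ≤ ∑ ε : Fin N → Bool, Real.exp (cubeS (fun n => a (n+1)) N ε) :=
            Finset.sum_nonneg fun _ _ => (Real.exp_pos _).le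
          have h2 := Real.cosh_le_exp_half_sq (a 0)
          have h3 := ih (fun n => a (n + 1))
          have h4 : (0:ℝ) ≤ 2 * Real.exp (a 0 ^ 2 / 2) := by positivity
          nlinarith [Real.cosh_pos (a 0)]
      _ = 2 ^ (N+1) * Real.exp (∑ n ∈ range (N+1), a n ^ 2 / 2) := by
          rw [Finset.sum_range_succ' (fun n => a n ^ 2 / 2), Real.exp_add]
          ring

lemma cubeS_neg (a : ℕ → ℝ) (N : ℕ) (ε : Fin N → Bool) :
    cubeS (fun n => -a n) N ε = -cubeS a N ε := by
  simp [cubeS, Finset.sum_neg_distrib]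

lemma abs_pow_le_exp (x : ℝ) (m : ℕ) :
    |x| ^ m ≤ (Nat.factorial m : ℝ) * (Real.exp x + Real.exp (-x)) := by
  have h1 : |x| ^ m / (Nat.factorial m : ℝ) ≤ Real.exp |x| := by
    calc |x| ^ m / (Nat.factorial m : ℝ)
        ≤ ∑ i ∈ range (m + 1), |x| ^ i / (Nat.factorial i : ℝ) := by
          exact Finset.single_le_sum (f := fun i => |x| ^ i / (Nat.factorial i : ℝ))
            (fun i _ => by positivity) (Finset.self_mem_range_succ m)
      _ ≤ Real.exp |x| := Real.sum_le_exp_of_nonneg (abs_nonneg x) (m + 1)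
  have h2 : Real.exp |x| ≤ Real.exp x + Real.exp (-x) := by
    rcases abs_cases x with ⟨h, _⟩ | ⟨h, _⟩
    · rw [h]; nlinarith [Real.exp_pos (-x)]
    · rw [h]; nlinarith [Real.exp_pos x]
  have hm : (0:ℝ) < (Nat.factorial m : ℝ) := by positivity
  calc |x| ^ m = (Nat.factorial m : ℝ) * (|x| ^ m / (Nat.factorial m : ℝ)) := by field_simp
    _ ≤ (Nat.factorial m : ℝ) * (Real.exp x + Real.exp (-x)) := by
        refine mul_le_mul_of_nonneg_left (h1.trans h2) hm.le

lemma cube_even_moment_normalized (a : ℕ → ℝ) (N k : ℕ)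
    (h1 : ∑ n ∈ range N, a n ^ 2 = 1) :
    ∑ ε : Fin N → Bool, |cubeS a N ε| ^ (2 * k)
      ≤ 2 ^ N * ((Nat.factorial (2*k) : ℝ) * (2 * Real.exp 2⁻¹)) := by
  have key : ∀ ε : Fin N → Bool, |cubeS a N ε| ^ (2 * k)
      ≤ (Nat.factorial (2*k) : ℝ) * (Real.exp (cubeS a N ε) + Real.exp (cubeS (fun n => -a n) N ε)) := by
    intro ε; rw [cubeS_neg]; exact abs_pow_le_exp _ _
  have hhalf : ∑ n ∈ range N, a n ^ 2 / 2 = 2⁻¹ := by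
    rw [← Finset.sum_div, h1]; norm_num
  have hhalf' : ∑ n ∈ range N, (-a n) ^ 2 / 2 = 2⁻¹ := by
    simp only [neg_sq]
    exact hhalf
  calc ∑ ε : Fin N → Bool, |cubeS a N ε| ^ (2 * k)
      ≤ ∑ ε : Fin N → Bool, (Nat.factorial (2*k) : ℝ) *
          (Real.exp (cubeS a N ε) + Real.exp (cubeS (fun n => -a n) N ε)) :=
        Finset.sum_le_sum fun ε _ => key ε
    _ = (Nat.factorial (2*k) : ℝ) * ((∑ ε : Fin N → Bool, Real.exp (cubeS a N ε))
          + ∑ ε : Fin N → Bool, Real.exp (cubeS (fun n => -a n) N ε)) := by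
        rw [mul_add, Finset.mul_sum, Finset.mul_sum, ← Finset.sum_add_distrib]
        exact Finset.sum_congr rfl fun ε _ => by ring
    _ ≤ (Nat.factorial (2*k) : ℝ) * ((2 ^ N * Real.exp 2⁻¹) + (2 ^ N * Real.exp 2⁻¹)) := by
        have hb1 := cube_exp_le a N
        have hb2 := cube_exp_le (fun n => -a n) N
        rw [hhalf] at hb1
        rw [hhalf'] at hb2
        have : (0:ℝ) ≤ (Nat.factorial (2*k) : ℝ) := by positivity
        exact mul_le_mul_of_nonneg_left (add_le_add hb1 hb2) this
    _ = 2 ^ N * ((Nat.factorial (2*k) : ℝ) * (2 * Real.exp 2⁻¹)) := by ring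



lemma cubeS_smul_real (c : ℝ) (a : ℕ → ℝ) (N : ℕ) (ε : Fin N → Bool) :
    cubeS (fun n => c * a n) N ε = c * cubeS a N ε := by
  simp only [cubeS, smul_eq_mul, Finset.mul_sum]
  exact Finset.sum_congr rfl fun n _ => by ring

lemma cube_even_moment (a : ℕ → ℝ) (N k : ℕ) :
    ∑ ε : Fin N → Bool, |cubeS a N ε| ^ (2 * k)
      ≤ 2 ^ N * (Nat.factorial (2*k) * (2 * Real.exp 2⁻¹)) * (∑ n ∈ range N, a n ^ 2) ^ k := by
  rcases Nat.eq_zero_or_pos k with hk | hk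
  · subst hk
    simp only [Nat.mul_zero, pow_zero, mul_one, Nat.factorial_zero, Nat.cast_one, one_mul]
    rw [Finset.sum_const, nsmul_eq_mul, mul_one]
    rw [show ((Finset.univ : Finset (Fin N → Bool)).card : ℝ) = (2:ℝ) ^ N from card_cube N]
    nlinarith [Real.one_le_exp (by norm_num : (0:ℝ) ≤ 2⁻¹), pow_pos (by norm_num : (0:ℝ) < 2) N]
  · set s := ∑ n ∈ range N, a n ^ 2 with hs
    have hs0 : 0 ≤ s := Finset.sum_nonneg fun n _ => sq_nonneg _
    rcases eq_or_lt_of_le hs0 with hz | hpos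
    · -- s = 0 : all coefficients vanish
      have hzero : ∀ n ∈ range N, a n = 0 := by
        intro n hn
        have := (Finset.sum_eq_zero_iff_of_nonneg (fun i _ => sq_nonneg (a i))).1 hz.symm n hn
        nlinarith [this, sq_nonneg (a n)]
      have hS : ∀ ε : Fin N → Bool, cubeS a N ε = 0 := by
        intro ε
        apply Finset.sum_eq_zero
        intro n _
        rw [hzero n (Finset.mem_range.2 n.isLt), smul_zero]
      have : (0:ℝ) < 2 * k := by positivity
      calc ∑ ε : Fin N → Bool, |cubeS a N ε| ^ (2 * k)
          = 0 := by
            apply Finset.sum_eq_zero; intro ε _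
            rw [hS ε, abs_zero, zero_pow (by omega : 2 * k ≠ 0)]
        _ ≤ _ := by
            rw [← hz, zero_pow (by omega : k ≠ 0), mul_zero]
    · set σ := Real.sqrt s with hσ
      have hσpos : 0 < σ := Real.sqrt_pos.2 hpos
      have hσsq : σ ^ 2 = s := Real.sq_sqrt hs0
      set a' : ℕ → ℝ := fun n => a n / σ with ha'
      have hnorm : ∑ n ∈ range N, a' n ^ 2 = 1 := by
        simp only [ha', div_pow]
        rw [← Finset.sum_div, hσsq, ← hs, div_self hpos.ne']
      have hrep : ∀ ε : Fin N → Bool, cubeS a N ε = σ * cubeS a' N ε := by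
        intro ε
        rw [← cubeS_smul_real]
        congr 1
        funext n
        exact (mul_div_cancel₀ (a n) hσpos.ne').symm
      have hsk : σ ^ (2 * k) = s ^ k := by rw [pow_mul, hσsq]
      calc ∑ ε : Fin N → Bool, |cubeS a N ε| ^ (2 * k)
          = s ^ k * ∑ ε : Fin N → Bool, |cubeS a' N ε| ^ (2 * k) := by
            rw [Finset.mul_sum]
            refine Finset.sum_congr rfl fun ε _ => ?_
            rw [hrep ε, abs_mul, mul_pow, abs_of_nonneg hσpos.le, hsk]
        _ ≤ s ^ k * (2 ^ N * (Nat.factorial (2*k) * (2 * Real.exp 2⁻¹))) := by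
            refine mul_le_mul_of_nonneg_left ?_ (by positivity)
            exact cube_even_moment_normalized a' N k hnorm
        _ = _ := by ring



lemma avg_le_rpow_avg (N : ℕ) (z : (Fin N → Bool) → ℝ) (hz : ∀ ε, 0 ≤ z ε) {q : ℝ}
    (hq : 1 ≤ q) :
    (2 ^ N : ℝ)⁻¹ * ∑ ε : Fin N → Bool, z ε
      ≤ ((2 ^ N : ℝ)⁻¹ * ∑ ε : Fin N → Bool, z ε ^ q) ^ (1 / q) := by
  have h2N : (0:ℝ) < 2 ^ N := by positivity
  have hw' : ∑ _ε : Fin N → Bool, (2 ^ N : ℝ)⁻¹ = 1 := by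
    rw [Finset.sum_const, nsmul_eq_mul, show ((Finset.univ : Finset (Fin N → Bool)).card : ℝ)
      = (2:ℝ) ^ N from card_cube N, mul_inv_cancel₀ h2N.ne']
  have := Real.arith_mean_le_rpow_mean Finset.univ (fun _ => (2 ^ N : ℝ)⁻¹) z
    (fun _ _ => by positivity) hw' (fun ε _ => hz ε) hq
  rw [← Finset.mul_sum] at this
  rw [← Finset.mul_sum] at this
  exact this

lemma minkowski_finset {J : Type*} (N : ℕ) (s : Finset J) (Y : J → (Fin N → Bool) → ℝ)
    (hY : ∀ j ε, 0 ≤ Y j ε) {q : ℝ} (hq : 1 ≤ q) :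
    (∑ ε : Fin N → Bool, (∑ j ∈ s, Y j ε) ^ q) ^ (1 / q)
      ≤ ∑ j ∈ s, (∑ ε : Fin N → Bool, Y j ε ^ q) ^ (1 / q) := by
  have hq0 : q ≠ 0 := by positivity
  classical
  induction s using Finset.induction_on with
  | empty =>
    simp [Real.zero_rpow hq0, Real.zero_rpow (inv_ne_zero hq0)]
  | insert j s' hj ih =>
    have habs : ∀ (f : (Fin N → Bool) → ℝ), (∀ ε, 0 ≤ f ε) →
        (∑ ε : Fin N → Bool, |f ε| ^ q) = ∑ ε : Fin N → Bool, f ε ^ q := by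
      intro f hf
      exact Finset.sum_congr rfl fun ε _ => by rw [abs_of_nonneg (hf ε)]
    calc (∑ ε : Fin N → Bool, (∑ i ∈ insert j s', Y i ε) ^ q) ^ (1 / q)
        = (∑ ε : Fin N → Bool, |Y j ε + ∑ i ∈ s', Y i ε| ^ q) ^ (1 / q) := by
          rw [habs _ (fun ε => add_nonneg (hY j ε) (Finset.sum_nonneg fun i _ => hY i ε))]
          refine congrArg (· ^ (1/q)) (Finset.sum_congr rfl fun ε _ => ?_)
          rw [Finset.sum_insert hj]
      _ ≤ (∑ ε : Fin N → Bool, |Y j ε| ^ q) ^ (1 / q)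
            + (∑ ε : Fin N → Bool, |∑ i ∈ s', Y i ε| ^ q) ^ (1 / q) :=
          Real.Lp_add_le Finset.univ _ _ hq
      _ ≤ (∑ ε : Fin N → Bool, Y j ε ^ q) ^ (1 / q)
            + ∑ i ∈ s', (∑ ε : Fin N → Bool, Y i ε ^ q) ^ (1 / q) := by
          rw [habs _ (hY j), habs _ (fun ε => Finset.sum_nonneg fun i _ => hY i ε)]
          exact add_le_add le_rfl ih
      _ = ∑ i ∈ insert j s', (∑ ε : Fin N → Bool, Y i ε ^ q) ^ (1 / q) := by
          rw [Finset.sum_insert hj]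

noncomputable def KA (k : ℕ) : ℝ := Nat.factorial (2*k) * (2 * Real.exp 2⁻¹)

lemma one_le_KA (k : ℕ) : 1 ≤ KA k := by
  unfold KA
  have h1 : (1:ℝ) ≤ Nat.factorial (2*k) := Nat.one_le_cast.mpr (Nat.factorial_pos _)
  nlinarith [Real.one_le_exp (by norm_num : (0:ℝ) ≤ 2⁻¹)]

lemma KA_pos (k : ℕ) : 0 < KA k := lt_of_lt_of_le one_pos (one_le_KA k)

/-- Scalar Khintchine upper bound, real exponent. -/
lemma scalar_p_moment (a : ℕ → ℝ) (N : ℕ) {p : ℝ} (hp : 0 < p) (k : ℕ) (hk1 : 1 ≤ k)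
    (hk : p ≤ 2 * k) :
    ∑ ε : Fin N → Bool, |cubeS a N ε| ^ p
      ≤ 2 ^ N * KA k * (∑ n ∈ range N, a n ^ 2) ^ (p / 2) := by
  have h2N : (0:ℝ) < 2 ^ N := by positivity
  have hkR : (0:ℝ) < 2 * k := by positivity
  set s := ∑ n ∈ range N, a n ^ 2 with hs
  have hs0 : 0 ≤ s := Finset.sum_nonneg fun n _ => sq_nonneg _
  have hq : 1 ≤ 2 * (k:ℝ) / p := by
    rw [le_div_iff₀ hp]; linarith
  have pm := avg_le_rpow_avg N (fun ε => |cubeS a N ε| ^ p)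
    (fun ε => Real.rpow_nonneg (abs_nonneg _) p) hq
  have hzq : ∀ ε : Fin N → Bool, (|cubeS a N ε| ^ p) ^ (2 * (k:ℝ) / p)
      = |cubeS a N ε| ^ (2 * k) := by
    intro ε
    rw [← Real.rpow_natCast |cubeS a N ε| (2 * k), ← Real.rpow_mul (abs_nonneg _)]
    congr 1
    push_cast
    field_simp
  simp only [hzq] at pm
  have hk0 : (k:ℝ) ≠ 0 := by positivity
  have hdiv : p / (2 * (k:ℝ)) ≤ 1 := (div_le_one hkR).mpr hk
  have he : (1:ℝ) / (2 * (k:ℝ) / p) = p / (2 * (k:ℝ)) := by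
    field_simp
  have hA0 : (0:ℝ) ≤ (2 ^ N : ℝ)⁻¹ * ∑ ε : Fin N → Bool, |cubeS a N ε| ^ (2 * k) := by
    positivity
  have hAle : (2 ^ N : ℝ)⁻¹ * ∑ ε : Fin N → Bool, |cubeS a N ε| ^ (2 * k) ≤ KA k * s ^ k := by
    rw [inv_mul_le_iff₀ h2N, ← mul_assoc]
    exact cube_even_moment a N k
  have hmid : ((2 ^ N : ℝ)⁻¹ * ∑ ε : Fin N → Bool, |cubeS a N ε| ^ (2 * k))
      ^ ((1:ℝ) / (2 * (k:ℝ) / p)) ≤ KA k * s ^ (p / 2) := by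
    rw [he]
    calc ((2 ^ N : ℝ)⁻¹ * ∑ ε : Fin N → Bool, |cubeS a N ε| ^ (2 * k)) ^ (p / (2 * (k:ℝ)))
        ≤ (KA k * s ^ k) ^ (p / (2 * (k:ℝ))) :=
          Real.rpow_le_rpow hA0 hAle (by positivity)
      _ = KA k ^ (p / (2 * (k:ℝ))) * (s ^ k) ^ (p / (2 * (k:ℝ))) :=
          Real.mul_rpow (KA_pos k).le (by positivity)
      _ ≤ KA k * s ^ (p / 2) := by
          have h1 : KA k ^ (p / (2 * (k:ℝ))) ≤ KA k := by
            calc KA k ^ (p / (2 * (k:ℝ))) ≤ KA k ^ (1:ℝ) :=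
                Real.rpow_le_rpow_of_exponent_le (one_le_KA k) hdiv
              _ = KA k := Real.rpow_one _
          have h2 : (s ^ k : ℝ) ^ (p / (2 * (k:ℝ))) = s ^ (p / 2) := by
            rw [← Real.rpow_natCast s k, ← Real.rpow_mul hs0]
            congr 1
            field_simp
          rw [h2]
          exact mul_le_mul_of_nonneg_right h1 (Real.rpow_nonneg hs0 _)
  calc ∑ ε : Fin N → Bool, |cubeS a N ε| ^ p
      = 2 ^ N * ((2 ^ N : ℝ)⁻¹ * ∑ ε : Fin N → Bool, |cubeS a N ε| ^ p) := by
        field_simp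
    _ ≤ 2 ^ N * (((2 ^ N : ℝ)⁻¹ * ∑ ε : Fin N → Bool, |cubeS a N ε| ^ (2 * k))
          ^ ((1:ℝ) / (2 * (k:ℝ) / p))) :=
        mul_le_mul_of_nonneg_left pm h2N.le
    _ ≤ 2 ^ N * (KA k * s ^ (p / 2)) := mul_le_mul_of_nonneg_left hmid h2N.le
    _ = 2 ^ N * KA k * s ^ (p / 2) := by ring



section Hilbert

variable {H : Type*} [NormedAddCommGroup H] [InnerProductSpace ℝ H]

/-- Parseval-type identity for the second moment. -/
lemma cube_norm_sq (b : ℕ → H) (N : ℕ) :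
    ∑ ε : Fin N → Bool, ‖cubeS b N ε‖ ^ 2 = 2 ^ N * ∑ n ∈ range N, ‖b n‖ ^ 2 := by
  induction N generalizing b with
  | zero => simp [cubeS]
  | succ N ih =>
    rw [sum_cube_succ N (fun ε => ‖cubeS b (N+1) ε‖ ^ 2)]
    have par : ∀ ε : Fin N → Bool,
        ‖cubeS b (N+1) (Fin.cons true ε)‖ ^ 2 + ‖cubeS b (N+1) (Fin.cons false ε)‖ ^ 2
          = 2 * ‖b 0‖ ^ 2 + 2 * ‖cubeS (fun n => b (n+1)) N ε‖ ^ 2 := by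
      intro ε
      rw [cubeS_cons_true, cubeS_cons_false]
      have h1 := norm_add_sq_real (b 0) (cubeS (fun n => b (n+1)) N ε)
      have h2 : ‖-b 0 + cubeS (fun n => b (n+1)) N ε‖ ^ 2
          = ‖cubeS (fun n => b (n+1)) N ε‖ ^ 2
            - 2 * inner ℝ (cubeS (fun n => b (n+1)) N ε) (b 0) + ‖b 0‖ ^ 2 := by
        rw [neg_add_eq_sub]
        exact norm_sub_sq_real _ _
      rw [h1, h2, real_inner_comm (b 0) (cubeS (fun n => b (n+1)) N ε)]
      ring
    rw [← Finset.sum_add_distrib]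
    calc ∑ ε : Fin N → Bool, (‖cubeS b (N+1) (Fin.cons true ε)‖ ^ 2
            + ‖cubeS b (N+1) (Fin.cons false ε)‖ ^ 2)
        = ∑ _ε : Fin N → Bool, (2 * ‖b 0‖ ^ 2)
            + 2 * ∑ ε : Fin N → Bool, ‖cubeS (fun n => b (n+1)) N ε‖ ^ 2 := by
          rw [Finset.mul_sum, ← Finset.sum_add_distrib]
          exact Finset.sum_congr rfl fun ε _ => par ε
      _ = 2 ^ N * (2 * ‖b 0‖ ^ 2) + 2 * (2 ^ N * ∑ n ∈ range N, ‖b (n+1)‖ ^ 2) := by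
          rw [Finset.sum_const, nsmul_eq_mul, card_cube, ih]
      _ = 2 ^ (N+1) * ∑ n ∈ range (N+1), ‖b n‖ ^ 2 := by
          rw [Finset.sum_range_succ' (fun n => ‖b n‖ ^ 2)]
          ring

lemma map_cubeS {V W : Type*} [AddCommGroup V] [Module ℝ V] [AddCommGroup W] [Module ℝ W]
    (f : V →ₗ[ℝ] W) (b : ℕ → V) (N : ℕ) (ε : Fin N → Bool) :
    f (cubeS b N ε) = cubeS (fun n => f (b n)) N ε := by
  simp [cubeS, map_sum, _root_.map_smul]




lemma norm_rpow_eq_sq_rpow (x : H) (p : ℝ) : ‖x‖ ^ p = (‖x‖ ^ 2 : ℝ) ^ (p / 2) := by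
  rw [← Real.rpow_natCast ‖x‖ 2, ← Real.rpow_mul (norm_nonneg _)]
  congr 1
  push_cast
  ring

lemma sq_rpow_eq_abs_rpow (x : ℝ) (p : ℝ) : (x ^ 2 : ℝ) ^ (p / 2) = |x| ^ p := by
  rw [← sq_abs, ← Real.rpow_natCast |x| 2, ← Real.rpow_mul (abs_nonneg _)]
  congr 1
  push_cast
  ring

lemma hilbert_p_moment (b : ℕ → H) (N : ℕ) {p : ℝ} (hp2 : 2 ≤ p) (k : ℕ) (hk1 : 1 ≤ k)
    (hk : p ≤ 2 * k) :
    ∑ ε : Fin N → Bool, ‖cubeS b N ε‖ ^ p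
      ≤ 2 ^ N * KA k * (∑ n ∈ range N, ‖b n‖ ^ 2) ^ (p / 2) := by
  classical
  have hp : (0:ℝ) < p := by linarith
  set q : ℝ := p / 2 with hqdef
  have hq1 : 1 ≤ q := by rw [hqdef]; linarith
  have hq0 : 0 < q := by linarith
  set K : Submodule ℝ H := Submodule.span ℝ (Set.range fun i : Fin N => b i) with hK
  haveI : FiniteDimensional ℝ K := FiniteDimensional.span_of_finite ℝ (Set.finite_range _)
  set e := stdOrthonormalBasis ℝ K with he
  set b'' : ℕ → K := fun n =>
    if h : n < N then ⟨b n, Submodule.subset_span ⟨⟨n, h⟩, rfl⟩⟩ else 0 with hb''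
  have hcoe : ∀ n, n < N → ((b'' n : K) : H) = b n := by
    intro n h; simp [hb'', h]
  have hnormb : ∀ n, n < N → ‖b'' n‖ = ‖b n‖ := by
    intro n h
    rw [Submodule.coe_norm, hcoe n h]
  -- the cube sums live in K
  have hSc : ∀ ε : Fin N → Bool, cubeS b N ε = ((cubeS b'' N ε : K) : H) := by
    intro ε
    rw [show ((cubeS b'' N ε : K) : H) = K.subtype (cubeS b'' N ε) from rfl, map_cubeS]
    unfold cubeS
    refine Finset.sum_congr rfl fun n _ => ?_
    simp only [Submodule.subtype_apply]
    rw [hcoe n n.isLt]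
  -- coordinates
  set X : Fin (Module.finrank ℝ K) → (Fin N → Bool) → ℝ :=
    fun j ε => e.repr (cubeS b'' N ε) j with hX
  have hXcube : ∀ j ε, X j ε = cubeS (fun n => e.repr (b'' n) j) N ε := by
    intro j ε
    rw [hX]
    simp only [cubeS, map_sum, _root_.map_smul]
    rw [WithLp.ofLp_sum, Finset.sum_apply]
    exact Finset.sum_congr rfl fun n _ => by simp [PiLp.smul_apply, smul_eq_mul]
  -- Parseval pointwise
  have hpar : ∀ y : K, ‖y‖ ^ 2 = ∑ j, (e.repr y j) ^ 2 := by
    intro y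
    rw [← e.repr.norm_map y, EuclideanSpace.norm_eq, Real.sq_sqrt (Finset.sum_nonneg fun j _ =>
      sq_nonneg _)]
    exact Finset.sum_congr rfl fun j _ => by rw [Real.norm_eq_abs, sq_abs]
  have hT : ∀ ε : Fin N → Bool, ‖cubeS b N ε‖ ^ 2 = ∑ j, (X j ε) ^ 2 := by
    intro ε
    rw [hSc ε, ← Submodule.coe_norm, hpar]
  -- the coefficient sums
  set s : Fin (Module.finrank ℝ K) → ℝ := fun j => ∑ n ∈ range N, (e.repr (b'' n) j) ^ 2 with hs
  have hs0 : ∀ j, 0 ≤ s j := fun j => Finset.sum_nonneg fun n _ => sq_nonneg _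
  have hsum_s : ∑ j, s j = ∑ n ∈ range N, ‖b n‖ ^ 2 := by
    rw [hs, Finset.sum_comm]
    refine Finset.sum_congr rfl fun n hn => ?_
    rw [← hnormb n (Finset.mem_range.1 hn), hpar (b'' n)]
  set Stot : ℝ := ∑ n ∈ range N, ‖b n‖ ^ 2 with hStot
  have hStot0 : 0 ≤ Stot := Finset.sum_nonneg fun n _ => sq_nonneg _
  have h2N : (0:ℝ) < 2 ^ N := by positivity
  -- scalar bound per coordinate
  have hcoord : ∀ j, ∑ ε : Fin N → Bool, ((X j ε) ^ 2 : ℝ) ^ q ≤ 2 ^ N * KA k * (s j) ^ q := by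
    intro j
    have : ∀ ε : Fin N → Bool, ((X j ε) ^ 2 : ℝ) ^ q = |cubeS (fun n => e.repr (b'' n) j) N ε| ^ p := by
      intro ε
      rw [hqdef, sq_rpow_eq_abs_rpow, hXcube]
    simp only [this]
    exact scalar_p_moment (fun n => e.repr (b'' n) j) N hp k hk1 hk
  -- Minkowski
  have mink := minkowski_finset N Finset.univ (fun j ε => (X j ε) ^ 2)
    (fun j ε => sq_nonneg _) hq1
  have hsum_nonneg : (0:ℝ) ≤ ∑ ε : Fin N → Bool, (∑ j, (X j ε) ^ 2) ^ q :=
    Finset.sum_nonneg fun ε _ => Real.rpow_nonneg (Finset.sum_nonneg fun j _ => sq_nonneg _) _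
  have hrhs : ∑ j, (∑ ε : Fin N → Bool, ((X j ε) ^ 2 : ℝ) ^ q) ^ (1/q)
      ≤ (2 ^ N * KA k) ^ (1/q) * Stot := by
    calc ∑ j, (∑ ε : Fin N → Bool, ((X j ε) ^ 2 : ℝ) ^ q) ^ (1/q)
        ≤ ∑ j, ((2 ^ N * KA k) ^ (1/q) * s j) := by
          refine Finset.sum_le_sum fun j _ => ?_
          have h1 : (∑ ε : Fin N → Bool, ((X j ε) ^ 2 : ℝ) ^ q) ^ (1/q)
              ≤ (2 ^ N * KA k * (s j) ^ q) ^ (1/q) :=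
            Real.rpow_le_rpow (Finset.sum_nonneg fun ε _ => Real.rpow_nonneg (sq_nonneg _) _)
              (hcoord j) (one_div_nonneg.mpr hq0.le)
          refine h1.trans (le_of_eq ?_)
          rw [Real.mul_rpow (mul_nonneg h2N.le (KA_pos k).le) (Real.rpow_nonneg (hs0 j) _),
            ← Real.rpow_mul (hs0 j), mul_one_div, div_self hq0.ne', Real.rpow_one]
      _ = (2 ^ N * KA k) ^ (1/q) * Stot := by
          rw [← Finset.mul_sum, hsum_s]
  have key : ∑ ε : Fin N → Bool, (∑ j, (X j ε) ^ 2) ^ q ≤ 2 ^ N * KA k * Stot ^ q := by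
    have h2 := mink.trans hrhs
    have h3 := Real.rpow_le_rpow (Real.rpow_nonneg hsum_nonneg _) h2 hq0.le
    rw [← Real.rpow_mul hsum_nonneg, one_div_mul_cancel hq0.ne', Real.rpow_one] at h3
    refine h3.trans (le_of_eq ?_)
    rw [Real.mul_rpow (Real.rpow_nonneg (mul_nonneg h2N.le (KA_pos k).le) _) hStot0,
      ← Real.rpow_mul (mul_nonneg h2N.le (KA_pos k).le), one_div_mul_cancel hq0.ne',
      Real.rpow_one]
  calc ∑ ε : Fin N → Bool, ‖cubeS b N ε‖ ^ p
      = ∑ ε : Fin N → Bool, (∑ j, (X j ε) ^ 2) ^ q := by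
        refine Finset.sum_congr rfl fun ε _ => ?_
        rw [norm_rpow_eq_sq_rpow, hT ε, hqdef]
    _ ≤ 2 ^ N * KA k * Stot ^ q := key
    _ = 2 ^ N * KA k * Stot ^ (p/2) := by rw [hqdef]




lemma rpow_two_eq (x : ℝ) : x ^ (2:ℝ) = x ^ (2:ℕ) := by
  rw [show (2:ℝ) = ((2:ℕ):ℝ) by norm_num, Real.rpow_natCast]

lemma cubeS_smul {H : Type*} [AddCommGroup H] [Module ℝ H] (c : ℝ) (b : ℕ → H) (N : ℕ)
    (ε : Fin N → Bool) :
    cubeS (fun n => c • b n) N ε = c • cubeS b N ε := by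
  simp only [cubeS, Finset.smul_sum]
  exact Finset.sum_congr rfl fun n _ => smul_comm _ _ _

lemma hilbert_lower {p : ℝ} (hp : 0 < p) (hp2 : p < 2) (b : ℕ → H) (N : ℕ) :
    KA 2 ^ (-((2 - p) / 2)) * 2 ^ N * (∑ n ∈ range N, ‖b n‖ ^ 2) ^ (p / 2)
      ≤ ∑ ε : Fin N → Bool, ‖cubeS b N ε‖ ^ p := by
  set P : ℝ := (4 - p) / 2 with hPdef
  set Q : ℝ := (4 - p) / (2 - p) with hQdef
  have h4p : (0:ℝ) < 4 - p := by linarith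
  have h2p : (0:ℝ) < 2 - p := by linarith
  have hP0 : 0 < P := by rw [hPdef]; positivity
  have hQ0 : 0 < Q := by rw [hQdef]; positivity
  have hP1 : 1 < P := by rw [hPdef]; rw [lt_div_iff₀ (by norm_num : (0:ℝ) < 2)]; linarith
  have hconj : P⁻¹ + Q⁻¹ = 1 := by
    rw [hPdef, hQdef]
    field_simp
    ring
  have hpq : Real.HolderConjugate P Q := Real.holderConjugate_iff.mpr ⟨hP1, hconj⟩
  have hPQ : P / Q = (2 - p) / 2 := by
    rw [hPdef, hQdef]
    field_simp
  rw [show -((2 - p) / 2) = -(P / Q) by rw [hPQ]]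
  set Stot : ℝ := ∑ n ∈ range N, ‖b n‖ ^ 2 with hStot
  have hStot0 : 0 ≤ Stot := Finset.sum_nonneg fun n _ => sq_nonneg _
  have hTp0 : (0:ℝ) ≤ ∑ ε : Fin N → Bool, ‖cubeS b N ε‖ ^ p :=
    Finset.sum_nonneg fun ε _ => Real.rpow_nonneg (norm_nonneg _) _
  rcases eq_or_lt_of_le hStot0 with hz | hpos
  · rw [← hz, Real.zero_rpow (by positivity : p / 2 ≠ 0), mul_zero]
    exact hTp0
  · -- normalize
    set σ : ℝ := Real.sqrt Stot with hσ
    have hσpos : 0 < σ := Real.sqrt_pos.2 hpos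
    have hσsq : σ ^ 2 = Stot := Real.sq_sqrt hStot0
    set b' : ℕ → H := fun n => σ⁻¹ • b n with hb'
    have hnorm1 : ∑ n ∈ range N, ‖b' n‖ ^ 2 = 1 := by
      simp only [hb', norm_smul, norm_inv, Real.norm_eq_abs, abs_of_pos hσpos, mul_pow]
      rw [← Finset.mul_sum, ← hStot, ← hσsq]
      field_simp
    have hrep : ∀ ε : Fin N → Bool, cubeS b N ε = σ • cubeS b' N ε := by
      intro ε
      rw [← cubeS_smul]
      congr 1
      funext n
      rw [hb', smul_smul, mul_inv_cancel₀ hσpos.ne', one_smul]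
    -- second moment of normalized sum
    have hT2 : ∑ ε : Fin N → Bool, ‖cubeS b' N ε‖ ^ (2:ℝ) = 2 ^ N := by
      calc ∑ ε : Fin N → Bool, ‖cubeS b' N ε‖ ^ (2:ℝ)
          = ∑ ε : Fin N → Bool, ‖cubeS b' N ε‖ ^ (2:ℕ) :=
            Finset.sum_congr rfl fun ε _ => rpow_two_eq _
        _ = 2 ^ N * ∑ n ∈ range N, ‖b' n‖ ^ 2 := cube_norm_sq b' N
        _ = 2 ^ N := by rw [hnorm1, mul_one]
    have hT4 : ∑ ε : Fin N → Bool, ‖cubeS b' N ε‖ ^ (4:ℝ) ≤ 2 ^ N * KA 2 := by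
      have := hilbert_p_moment b' N (by norm_num : (2:ℝ) ≤ 4) 2 (by norm_num)
        (by norm_num)
      rw [hnorm1, Real.one_rpow, mul_one] at this
      exact this
    set Tp : ℝ := ∑ ε : Fin N → Bool, ‖cubeS b' N ε‖ ^ p with hTp
    have hTp0' : 0 ≤ Tp := Finset.sum_nonneg fun ε _ => Real.rpow_nonneg (norm_nonneg _) _
    have h2N : (0:ℝ) < 2 ^ N := by positivity
    -- Hölder
    have hexp : p / P + 4 / Q = 2 := by
      rw [hPdef, hQdef]
      field_simp
      ring
    have hfg : ∀ ε : Fin N → Bool,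
        ‖cubeS b' N ε‖ ^ (p / P) * ‖cubeS b' N ε‖ ^ (4 / Q) = ‖cubeS b' N ε‖ ^ (2:ℝ) := by
      intro ε
      rw [← Real.rpow_add' (norm_nonneg _) (by rw [hexp]; norm_num), hexp]
    have holder := Real.inner_le_Lp_mul_Lq Finset.univ
      (f := fun ε : Fin N → Bool => ‖cubeS b' N ε‖ ^ (p / P))
      (g := fun ε : Fin N → Bool => ‖cubeS b' N ε‖ ^ (4 / Q)) hpq
    have hfP : ∀ ε : Fin N → Bool, |‖cubeS b' N ε‖ ^ (p / P)| ^ P = ‖cubeS b' N ε‖ ^ p := by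
      intro ε
      rw [abs_of_nonneg (Real.rpow_nonneg (norm_nonneg _) _), ← Real.rpow_mul (norm_nonneg _)]
      congr 1
      field_simp
    have hgQ : ∀ ε : Fin N → Bool, |‖cubeS b' N ε‖ ^ (4 / Q)| ^ Q = ‖cubeS b' N ε‖ ^ (4:ℝ) := by
      intro ε
      rw [abs_of_nonneg (Real.rpow_nonneg (norm_nonneg _) _), ← Real.rpow_mul (norm_nonneg _)]
      congr 1
      field_simp
    simp only [hfg, hfP, hgQ] at holder
    rw [hT2] at holder
    set E : ℝ := (2:ℝ) ^ N with hE
    set A : ℝ := E * KA 2 with hA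
    have hA0 : 0 < A := mul_pos h2N (KA_pos 2)
    have h1 : E ≤ Tp ^ (1 / P) * A ^ (1 / Q) := by
      refine holder.trans ?_
      refine mul_le_mul_of_nonneg_left ?_ (Real.rpow_nonneg hTp0' _)
      exact Real.rpow_le_rpow (Finset.sum_nonneg fun ε _ =>
        Real.rpow_nonneg (norm_nonneg _) _) hT4 (by positivity)
    -- raise to the power P
    have h2 : E ^ P ≤ Tp * A ^ (P / Q) := by
      have hh := Real.rpow_le_rpow (by positivity) h1 hP0.le
      rw [Real.mul_rpow (Real.rpow_nonneg hTp0' _) (Real.rpow_nonneg hA0.le _),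
        ← Real.rpow_mul hTp0', ← Real.rpow_mul hA0.le, one_div_mul_cancel hP0.ne',
        Real.rpow_one] at hh
      rw [show 1 / Q * P = P / Q by ring] at hh
      exact hh
    have hPsum : P = 1 + P / Q := by
      rw [hPdef, hQdef]
      field_simp
      ring
    have hEsplit : E ^ P = E * E ^ (P / Q) := by
      nth_rewrite 1 [hPsum]
      rw [Real.rpow_add h2N, Real.rpow_one]
    have hAsplit : A ^ (P / Q) = E ^ (P / Q) * KA 2 ^ (P / Q) :=
      Real.mul_rpow h2N.le (KA_pos 2).le
    have h3 : E ≤ Tp * KA 2 ^ (P / Q) := by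
      have hEx : 0 < E ^ (P / Q) := Real.rpow_pos_of_pos h2N _
      have := h2
      rw [hEsplit, hAsplit] at this
      have h' : E * E ^ (P / Q) ≤ Tp * KA 2 ^ (P / Q) * E ^ (P / Q) := by
        calc E * E ^ (P / Q) ≤ Tp * (E ^ (P / Q) * KA 2 ^ (P / Q)) := this
          _ = Tp * KA 2 ^ (P / Q) * E ^ (P / Q) := by ring
      exact le_of_mul_le_mul_right h' hEx
    have h4 : KA 2 ^ (-(P / Q)) * E ≤ Tp := by
      have := mul_le_mul_of_nonneg_left h3 (Real.rpow_nonneg (KA_pos 2).le (-(P / Q)))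
      calc KA 2 ^ (-(P / Q)) * E ≤ KA 2 ^ (-(P / Q)) * (Tp * KA 2 ^ (P / Q)) := this
        _ = Tp * (KA 2 ^ (P / Q) * KA 2 ^ (-(P / Q))) := by ring
        _ = Tp := by
            rw [← Real.rpow_add (KA_pos 2), add_neg_cancel, Real.rpow_zero, mul_one]
    -- rescale
    have hscale : ∑ ε : Fin N → Bool, ‖cubeS b N ε‖ ^ p = Stot ^ (p / 2) * Tp := by
      have hσp : σ ^ p = Stot ^ (p / 2) := by
        rw [hσ, Real.sqrt_eq_rpow, ← Real.rpow_mul hStot0]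
        congr 1
        ring
      rw [hTp, Finset.mul_sum]
      refine Finset.sum_congr rfl fun ε _ => ?_
      rw [hrep ε, norm_smul, Real.norm_eq_abs, abs_of_pos hσpos,
        Real.mul_rpow hσpos.le (norm_nonneg _), hσp]
    rw [hscale]
    calc KA 2 ^ (-(P / Q)) * 2 ^ N * Stot ^ (p / 2)
        = Stot ^ (p / 2) * (KA 2 ^ (-(P / Q)) * E) := by rw [hE]; ring
      _ ≤ Stot ^ (p / 2) * Tp :=
          mul_le_mul_of_nonneg_left h4 (Real.rpow_nonneg hStot0 _)

end Hilbert

section Main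

lemma rpow_half_cancel {x : ℝ} (hx : 0 ≤ x) {p : ℝ} (hp : p ≠ 0) :
    (x ^ (p / 2)) ^ (1 / p) = x ^ ((1:ℝ) / 2) := by
  rw [← Real.rpow_mul hx]
  congr 1
  field_simp

variable {H : Type*} [NormedAddCommGroup H] [InnerProductSpace ℝ H]
  [TopologicalSpace.SeparableSpace H]

lemma integral_Icc_radsum (G : H → ℝ) (hG : Continuous G) (b : ℕ → H) (N : ℕ) :
    ∫ t in Set.Icc (0:ℝ) 1, G (∑ n ∈ Finset.range N, rademacher n t • b n)
      = (2 ^ N : ℝ)⁻¹ * ∑ ε : Fin N → Bool, G (cubeS b N ε) := by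
  rw [MeasureTheory.integral_Icc_eq_integral_Ioc,
    ← intervalIntegral.integral_of_le (zero_le_one (α := ℝ))]
  exact integral_radsum_eq_avg G hG b N

lemma hI2 (b : ℕ → H) (N : ℕ) :
    ∫ t in Set.Icc (0:ℝ) 1, ‖∑ n ∈ Finset.range N, rademacher n t • b n‖ ^ 2
      = ∑ n ∈ range N, ‖b n‖ ^ 2 := by
  rw [integral_Icc_radsum (fun x : H => ‖x‖ ^ 2) ((continuous_norm).pow 2) b N,
    cube_norm_sq, ← mul_assoc, inv_mul_cancel₀ (by positivity : ((2:ℝ) ^ N) ≠ 0), one_mul]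

lemma hIp (b : ℕ → H) (N : ℕ) {p : ℝ} (hp : 0 < p) :
    ∫ t in Set.Icc (0:ℝ) 1, ‖∑ n ∈ Finset.range N, rademacher n t • b n‖ ^ p
      = (2 ^ N : ℝ)⁻¹ * ∑ ε : Fin N → Bool, ‖cubeS b N ε‖ ^ p :=
  integral_Icc_radsum (fun x : H => ‖x‖ ^ p)
    (continuous_norm.rpow_const fun _ => Or.inr hp.le) b N

end Main
end KK

open KK

/-- Hilbert-space-valued Khintchine (Kahane–Khintchine) inequality: for every
`p ∈ (0,∞)` there are constants `0 < c_p ≤ C_p < ∞`, independent of the separable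
Hilbert space `H`, such that for every finitely supported sequence `(b_n)` in `H` the
`L^p` and `L^2` norms of `Σ_n r_n(t) b_n` are comparable. -/
theorem kahane_khintchine_hilbert (p : ℝ) (hp : 0 < p) :
    ∃ c C : ℝ, 0 < c ∧ 0 < C ∧
      ∀ (H : Type) (_ : NormedAddCommGroup H) (_ : InnerProductSpace ℝ H)
        (_ : CompleteSpace H) (_ : TopologicalSpace.SeparableSpace H)
        (b : ℕ → H) (N : ℕ), (∀ n, N ≤ n → b n = 0) →
        c * (∫ t in Set.Icc (0 : ℝ) 1,
              ‖∑ n ∈ Finset.range N, rademacher n t • b n‖ ^ 2) ^ ((1 : ℝ) / 2) ≤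
          (∫ t in Set.Icc (0 : ℝ) 1,
              ‖∑ n ∈ Finset.range N, rademacher n t • b n‖ ^ p) ^ (1 / p) ∧
        (∫ t in Set.Icc (0 : ℝ) 1,
              ‖∑ n ∈ Finset.range N, rademacher n t • b n‖ ^ p) ^ (1 / p) ≤
          C * (∫ t in Set.Icc (0 : ℝ) 1,
              ‖∑ n ∈ Finset.range N, rademacher n t • b n‖ ^ 2) ^ ((1 : ℝ) / 2) := by

  rcases lt_or_ge p 2 with hp2 | hp2
  · -- small exponents : 0 < p < 2
    refine ⟨(KA 2 ^ (-((2 - p) / 2))) ^ (1 / p), 1,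
      Real.rpow_pos_of_pos (Real.rpow_pos_of_pos (KA_pos 2) _) _, one_pos, ?_⟩
    intro H i1 i2 i3 i4 b N _
    letI := i1; letI := i2; letI := i3; letI := i4
    have h2N : (0:ℝ) < 2 ^ N := by positivity
    set Stot : ℝ := ∑ n ∈ Finset.range N, ‖b n‖ ^ 2 with hStot
    have hStot0 : 0 ≤ Stot := Finset.sum_nonneg fun n _ => sq_nonneg _
    set Tp : ℝ := ∑ ε : Fin N → Bool, ‖cubeS b N ε‖ ^ p with hTpdef
    have hTp0 : 0 ≤ Tp := Finset.sum_nonneg fun ε _ => Real.rpow_nonneg (norm_nonneg _) _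
    rw [KK.hI2 b N, KK.hIp b N hp]
    have havg0 : (0:ℝ) ≤ (2 ^ N : ℝ)⁻¹ * Tp := by positivity
    constructor
    · -- lower bound
      have hlow := KK.hilbert_lower hp hp2 b N
      have hineq : KA 2 ^ (-((2 - p) / 2)) * Stot ^ (p / 2) ≤ (2 ^ N : ℝ)⁻¹ * Tp := by
        have heq : KA 2 ^ (-((2 - p) / 2)) * Stot ^ (p / 2)
            = (2 ^ N : ℝ)⁻¹ * (KA 2 ^ (-((2 - p) / 2)) * 2 ^ N * Stot ^ (p / 2)) := by
          field_simp
        rw [heq]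
        exact mul_le_mul_of_nonneg_left hlow (by positivity)
      have := Real.rpow_le_rpow
        (mul_nonneg (Real.rpow_nonneg (KA_pos 2).le _) (Real.rpow_nonneg hStot0 _)) hineq
        (by positivity : (0:ℝ) ≤ 1 / p)
      rw [Real.mul_rpow (Real.rpow_nonneg (KA_pos 2).le _) (Real.rpow_nonneg hStot0 _),
        rpow_half_cancel hStot0 hp.ne'] at this
      exact this
    · -- upper bound with constant 1
      rw [one_mul]
      have hq : (1:ℝ) ≤ 2 / p := by
        rw [le_div_iff₀ hp]
        linarith
      have pm := avg_le_rpow_avg N (fun ε => ‖cubeS b N ε‖ ^ p)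
        (fun ε => Real.rpow_nonneg (norm_nonneg _) _) hq
      have hz : ∀ ε : Fin N → Bool, (‖cubeS b N ε‖ ^ p) ^ (2 / p) = ‖cubeS b N ε‖ ^ (2:ℕ) := by
        intro ε
        rw [← Real.rpow_mul (norm_nonneg _), ← rpow_two_eq]
        congr 1
        field_simp
      simp only [hz] at pm
      rw [cube_norm_sq, ← mul_assoc, inv_mul_cancel₀ h2N.ne', one_mul, ← hStot] at pm
      have hpm : (2 ^ N : ℝ)⁻¹ * Tp ≤ Stot ^ (p / 2) := by
        rw [show (1:ℝ) / (2 / p) = p / 2 by rw [one_div_div]] at pm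
        exact pm
      have := Real.rpow_le_rpow havg0 hpm (by positivity : (0:ℝ) ≤ 1 / p)
      rw [rpow_half_cancel hStot0 hp.ne'] at this
      exact this
  · -- large exponents : 2 ≤ p
    set k : ℕ := ⌈p⌉₊ with hk
    have hk1 : 1 ≤ k := Nat.ceil_pos.mpr hp
    have hkp : p ≤ 2 * k := by
      have h1 := Nat.le_ceil p
      have h2 : (0:ℝ) ≤ (k:ℝ) := Nat.cast_nonneg _
      rw [hk] at *
      linarith
    refine ⟨1, KA k ^ (1 / p), one_pos, Real.rpow_pos_of_pos (KA_pos k) _, ?_⟩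
    intro H i1 i2 i3 i4 b N _
    letI := i1; letI := i2; letI := i3; letI := i4
    have h2N : (0:ℝ) < 2 ^ N := by positivity
    set Stot : ℝ := ∑ n ∈ Finset.range N, ‖b n‖ ^ 2 with hStot
    have hStot0 : 0 ≤ Stot := Finset.sum_nonneg fun n _ => sq_nonneg _
    set Tp : ℝ := ∑ ε : Fin N → Bool, ‖cubeS b N ε‖ ^ p with hTpdef
    have hTp0 : 0 ≤ Tp := Finset.sum_nonneg fun ε _ => Real.rpow_nonneg (norm_nonneg _) _
    rw [KK.hI2 b N, KK.hIp b N hp]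
    have havg0 : (0:ℝ) ≤ (2 ^ N : ℝ)⁻¹ * Tp := by positivity
    constructor
    · -- lower bound with constant 1
      rw [one_mul]
      have hq : (1:ℝ) ≤ p / 2 := by linarith
      have pm := avg_le_rpow_avg N (fun ε => ‖cubeS b N ε‖ ^ (2:ℝ))
        (fun ε => Real.rpow_nonneg (norm_nonneg _) _) hq
      have hz : ∀ ε : Fin N → Bool, (‖cubeS b N ε‖ ^ (2:ℝ)) ^ (p / 2)
          = ‖cubeS b N ε‖ ^ p := by
        intro ε
        rw [← Real.rpow_mul (norm_nonneg _)]
        congr 1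
        field_simp
      have hz2 : ∀ ε : Fin N → Bool, ‖cubeS b N ε‖ ^ (2:ℝ) = ‖cubeS b N ε‖ ^ (2:ℕ) :=
        fun ε => rpow_two_eq _
      simp only [hz] at pm
      rw [show (∑ ε : Fin N → Bool, ‖cubeS b N ε‖ ^ (2:ℝ))
          = ∑ ε : Fin N → Bool, ‖cubeS b N ε‖ ^ (2:ℕ) from Finset.sum_congr rfl fun ε _ => hz2 ε,
        cube_norm_sq, ← mul_assoc, inv_mul_cancel₀ h2N.ne', one_mul, ← hStot] at pm
      have hpm : Stot ≤ ((2 ^ N : ℝ)⁻¹ * Tp) ^ (2 / p) := by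
        rw [show (1:ℝ) / (p / 2) = 2 / p by rw [one_div_div]] at pm
        exact pm
      have := Real.rpow_le_rpow hStot0 hpm (by positivity : (0:ℝ) ≤ (1:ℝ) / 2)
      rw [← Real.rpow_mul havg0] at this
      rw [show (2 / p) * ((1:ℝ) / 2) = 1 / p by field_simp] at this
      exact this
    · -- upper bound
      have hup := KK.hilbert_p_moment b N hp2 k hk1 hkp
      have hineq : (2 ^ N : ℝ)⁻¹ * Tp ≤ KA k * Stot ^ (p / 2) := by
        rw [inv_mul_le_iff₀ h2N, ← mul_assoc]
        exact hup
      have := Real.rpow_le_rpow havg0 hineq (by positivity : (0:ℝ) ≤ 1 / p)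
      rw [Real.mul_rpow (KA_pos k).le (Real.rpow_nonneg hStot0 _),
        rpow_half_cancel hStot0 hp.ne'] at this
      exact this
end

section
/- Let X be a σ-finite measure space, r ≥ 1 an integer, S₁,...,S_r finite sets, and for each i ∈ {1,...,r} and q ∈ S_i let F^i_q ∈ L^{2r}(X; H) with H a separable Hilbert space. Suppose that for every sequence (q₁(0), q₁(1), ..., q_r(0), q_r(1)) ∈ S₁² × ⋯ × S_r² having the uniqueness property one has ∫_X Π_{i=1}^r ⟨F^i_{q_i(0)}(x), F^i_{q_i(1)}(x)⟩_H dμ(x) = 0. Then ∫_X Π_{i=1}^r ‖Σ_{q∈S_i} F^i_q(x)‖_H² dμ(x) ≤ C_r · ∫_X Π_{i=1}^r (Σ_{q∈S_i} ‖F^i_q(x)‖_H²) dμ(x), with C_r depending only on r. -/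
open MeasureTheory Finset
open Fintype (piFinset)
open scoped InnerProductSpace

/-!
Expanding each `‖∑ q ∈ S i, F i q x‖²` into inner products writes the left-hand side as a sum,
over sequences `q : Fin r → Fin 2 → ι`, of `∫ ∏ i, ⟪F i (q i 0), F i (q i 1)⟫`, and the
hypothesis kills every sequence with a value taken exactly once. What remains is bounded
pointwise by `∑_q ∏_{i,l} ‖F i (q i l) x‖` over sequences without a unique value. Such a
sequence is constant on the fibres of a map `g : Fin r × Fin 2 → Fin r × Fin 2` none of whose
nonempty fibres is a singleton. For fixed `g` the sum factorises over the fibres, and in each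
fibre all factors but two are bounded by their `ℓ²` norms while Cauchy–Schwarz handles the
other two; this gives `∏_{i,l} ‖F i · x‖_{ℓ²} = ∏ i, ∑ q, ‖F i q x‖²`. Summing over
the `(2r)^(2r)` maps `g` gives `C_r = (2r)^(2r)`.
-/

section Combinatorics

variable {P ι : Type*}

def HasUniqueValue (q : P → ι) : Prop := ∃ p, ∀ p', p' ≠ p → q p' ≠ q p

instance [Fintype P] [DecidableEq P] [DecidableEq ι] (q : P → ι) :
    Decidable (HasUniqueValue q) :=
  inferInstanceAs (Decidable (∃ p, ∀ p', p' ≠ p → q p' ≠ q p))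

theorem not_hasUniqueValue_iff {q : P → ι} :
    ¬HasUniqueValue q ↔ ∀ p, ∃ p', p' ≠ p ∧ q p' = q p := by
  simp only [HasUniqueValue, not_exists, not_forall, not_not, exists_prop]

theorem le_sqrt_sum_sq_of_mem {T : Finset ι} (f : ι → ℝ) {v : ι} (hv : v ∈ T) :
    f v ≤ √(∑ w ∈ T, f w ^ 2) :=
  (le_abs_self _).trans (Real.abs_le_sqrt (single_le_sum (fun w _ => sq_nonneg (f w)) hv))

variable [DecidableEq P]

theorem sum_prod_le_prod_sqrt_sum_sq (T : Finset ι) {K : Finset P} (hK : 1 < #K)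
    {b : P → ι → ℝ} (hb : ∀ p v, 0 ≤ b p v) :
    ∑ v ∈ T, ∏ p ∈ K, b p v ≤ ∏ p ∈ K, √(∑ v ∈ T, b p v ^ 2) := by
  obtain ⟨a, ha, c, hc, hac⟩ := one_lt_card.1 hK
  set L := (K.erase a).erase c
  have split (f : P → ℝ) : ∏ p ∈ K, f p = f a * f c * ∏ p ∈ L, f p := by
    rw [← mul_prod_erase K f ha, ← mul_prod_erase _ f (mem_erase.2 ⟨Ne.symm hac, hc⟩),
      mul_assoc]
  calc ∑ v ∈ T, ∏ p ∈ K, b p v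
      ≤ ∑ v ∈ T, b a v * b c v * ∏ p ∈ L, √(∑ w ∈ T, b p w ^ 2) := by
        refine sum_le_sum fun v hv => ?_
        rw [split]
        have hac_nonneg := mul_nonneg (hb a v) (hb c v)
        gcongr with p
        · exact fun p _ => hb p v
        · exact le_sqrt_sum_sq_of_mem (b p) hv
    _ = (∑ v ∈ T, b a v * b c v) * ∏ p ∈ L, √(∑ w ∈ T, b p w ^ 2) := (sum_mul ..).symm
    _ ≤ √(∑ v ∈ T, b a v ^ 2) * √(∑ v ∈ T, b c v ^ 2) * ∏ p ∈ L, √(∑ w ∈ T, b p w ^ 2) := by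
        gcongr
        exact Real.sum_mul_le_sqrt_mul_sqrt T (b a) (b c)
    _ = ∏ p ∈ K, √(∑ v ∈ T, b p v ^ 2) := (split fun p => √(∑ v ∈ T, b p v ^ 2)).symm

variable [Fintype P] [DecidableEq ι]

theorem sum_prod_of_comp_eq_le_prod_sqrt_sum_sq (T : Finset ι) {b : P → ι → ℝ}
    (hb : ∀ p v, 0 ≤ b p v) {g : P → P} (hg : ¬HasUniqueValue g) :
    ∑ q ∈ piFinset (fun _ : P => T) with q ∘ g = q, ∏ p, b p (q p)
      ≤ ∏ p, √(∑ v ∈ T, b p v ^ 2) := by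
  -- a sequence constant on the fibres of `g` is determined by its values on `Set.range g`
  set π := Set.rangeFactorization g
  set fiber : Set.range g → Finset P := fun s => {p | π p = s}
  have one_lt_card_fiber (s) : 1 < #(fiber s) := by
    obtain ⟨_, p, rfl⟩ := s
    obtain ⟨p', hne, heq⟩ := not_hasUniqueValue_iff.1 hg p
    exact one_lt_card.2 ⟨p, by simp [fiber, π, Set.rangeFactorization], p',
      by simp [fiber, π, Set.rangeFactorization, heq], hne.symm⟩
  set A := {q ∈ piFinset (fun _ : P => T) | q ∘ g = q}
  have comp_eq {q} (hq : q ∈ A) (p : P) : q (π p) = q p := congrFun (mem_filter.1 hq).2 p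
  have factor {q} (hq : q ∈ A) : ∏ p, b p (q p) = ∏ s, ∏ p ∈ fiber s, b p (q s) := by
    rw [← prod_fiberwise univ π]
    refine prod_congr rfl fun s _ => prod_congr rfl fun p hp => ?_
    rw [← (mem_filter.1 hp).2, comp_eq hq]
  set restrict : (P → ι) → Set.range g → ι := fun q s => q s
  have restrict_injOn : Set.InjOn restrict A := by
    intro q hq q' hq' h
    funext p
    rw [← comp_eq hq, ← comp_eq hq']
    exact congrFun h (π p)
  calc ∑ q ∈ A, ∏ p, b p (q p)
      = ∑ q ∈ A, ∏ s, ∏ p ∈ fiber s, b p (q s) := sum_congr rfl fun q hq => factor hq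
    _ = ∑ w ∈ A.image restrict, ∏ s, ∏ p ∈ fiber s, b p (w s) := by
        rw [sum_image restrict_injOn]
    _ ≤ ∑ w ∈ piFinset (fun _ : Set.range g => T), ∏ s, ∏ p ∈ fiber s, b p (w s) := by
        refine sum_le_sum_of_subset_of_nonneg ?_ fun w _ _ =>
          prod_nonneg fun s _ => prod_nonneg fun p _ => hb p (w s)
        simp only [subset_iff, mem_image]
        rintro _ ⟨q, hq, rfl⟩
        exact Fintype.mem_piFinset.2 fun s => Fintype.mem_piFinset.1 (mem_filter.1 hq).1 s
    _ = ∏ s, ∑ v ∈ T, ∏ p ∈ fiber s, b p v :=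
        (prod_univ_sum (fun _ => T) fun s v => ∏ p ∈ fiber s, b p v).symm
    _ ≤ ∏ s, ∏ p ∈ fiber s, √(∑ v ∈ T, b p v ^ 2) :=
        prod_le_prod (fun s _ => sum_nonneg fun v _ => prod_nonneg fun p _ => hb p v)
          fun s _ => sum_prod_le_prod_sqrt_sum_sq T (one_lt_card_fiber s) hb
    _ = ∏ p, √(∑ v ∈ T, b p v ^ 2) := prod_fiberwise univ π _

theorem sum_prod_not_hasUniqueValue_le [Nonempty P] (T : Finset ι) {b : P → ι → ℝ}
    (hb : ∀ p v, 0 ≤ b p v) :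
    ∑ q ∈ piFinset (fun _ : P => T) with ¬HasUniqueValue q, ∏ p, b p (q p)
      ≤ Fintype.card (P → P) * ∏ p, √(∑ v ∈ T, b p v ^ 2) := by
  -- `kernel q` picks one representative in each level set of `q`
  set kernel : (P → ι) → P → P := fun q => Function.invFun q ∘ q
  have comp_kernel (q : P → ι) : q ∘ kernel q = q := funext fun p => Function.invFun_eq ⟨p, rfl⟩
  have not_hasUniqueValue_kernel {q : P → ι} (hq : ¬HasUniqueValue q) :
      ¬HasUniqueValue (kernel q) := by
    refine not_hasUniqueValue_iff.2 fun p => ?_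
    obtain ⟨p', hne, heq⟩ := not_hasUniqueValue_iff.1 hq p
    exact ⟨p', hne, by simp only [kernel, Function.comp_apply, heq]⟩
  rw [← sum_fiberwise _ kernel, ← card_univ, ← nsmul_eq_mul]
  refine sum_le_card_nsmul _ _ _ fun g _ => ?_
  by_cases hg : HasUniqueValue g
  · rw [sum_eq_zero fun q hq => ?_]
    · exact prod_nonneg fun p _ => Real.sqrt_nonneg _
    · simp only [mem_filter] at hq
      exact absurd (hq.2 ▸ not_hasUniqueValue_kernel hq.1.2) (not_not.2 hg)
  · refine le_trans (sum_le_sum_of_subset_of_nonneg ?_ fun q _ _ =>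
      prod_nonneg fun p _ => hb p (q p)) (sum_prod_of_comp_eq_le_prod_sqrt_sum_sq T hb hg)
    intro q hq
    simp only [mem_filter] at hq ⊢
    exact ⟨hq.1.1, hq.2 ▸ comp_kernel q⟩

theorem sum_prod_prod_not_hasUniqueValue_le {κ : Type*} [Fintype κ] [DecidableEq κ]
    [Nonempty κ] (S : κ → Finset ι) {a : κ → ι → ℝ} (ha : ∀ i v, 0 ≤ a i v) :
    ∑ q ∈ piFinset (fun i => piFinset fun _ : Fin 2 => S i) with
        ¬HasUniqueValue (Function.uncurry q), ∏ i, ∏ l, a i (q i l)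
      ≤ Fintype.card (κ × Fin 2 → κ × Fin 2) * ∏ i, ∑ v ∈ S i, a i v ^ 2 := by
  set T := univ.biUnion S
  set b : κ × Fin 2 → ι → ℝ := fun p v => if v ∈ S p.1 then a p.1 v else 0
  have hb (p v) : 0 ≤ b p v := by unfold b; split_ifs <;> simp [ha]
  have sum_sq_b (p : κ × Fin 2) : ∑ v ∈ T, b p v ^ 2 = ∑ v ∈ S p.1, a p.1 v ^ 2 := by
    simp only [b, ite_pow, zero_pow two_ne_zero]
    rw [sum_ite_mem, inter_eq_right.2 (subset_biUnion_of_mem S (mem_univ _))]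
  calc _ = ∑ q ∈ ({q ∈ piFinset (fun i => piFinset fun _ : Fin 2 => S i) |
            ¬HasUniqueValue (Function.uncurry q)}).map (Equiv.curry κ (Fin 2) ι).symm.toEmbedding,
          ∏ p, b p (q p) := by
        rw [sum_map]
        refine sum_congr rfl fun q hq => ?_
        have hq' := Fintype.mem_piFinset.1 (mem_filter.1 hq).1
        rw [Fintype.prod_prod_type]
        refine prod_congr rfl fun i _ => prod_congr rfl fun l _ => ?_
        simp [b, Fintype.mem_piFinset.1 (hq' i) l]
    _ ≤ ∑ q ∈ piFinset (fun _ : κ × Fin 2 => T) with ¬HasUniqueValue q, ∏ p, b p (q p) := by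
        refine sum_le_sum_of_subset_of_nonneg ?_ fun q _ _ => prod_nonneg fun p _ => hb p (q p)
        simp only [subset_iff, mem_map, mem_filter]
        rintro _ ⟨q, ⟨hq, hne⟩, rfl⟩
        refine ⟨Fintype.mem_piFinset.2 fun p => mem_biUnion.2 ⟨p.1, mem_univ _, ?_⟩, hne⟩
        exact Fintype.mem_piFinset.1 (Fintype.mem_piFinset.1 hq p.1) p.2
    _ ≤ Fintype.card (κ × Fin 2 → κ × Fin 2) * ∏ p, √(∑ v ∈ T, b p v ^ 2) :=
        sum_prod_not_hasUniqueValue_le T hb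
    _ = Fintype.card (κ × Fin 2 → κ × Fin 2) * ∏ i, ∑ v ∈ S i, a i v ^ 2 := by
        simp only [Fintype.prod_prod_type, Fin.prod_univ_two, sum_sq_b]
        congr 1
        exact prod_congr rfl fun i _ => Real.mul_self_sqrt (sum_nonneg fun v _ => sq_nonneg _)

theorem sum_piFinset_fin_two {α M : Type*} [AddCommMonoid M] (s : Finset α) (f : α → α → M) :
    ∑ w ∈ piFinset (fun _ : Fin 2 => s), f (w 0) (w 1) = ∑ a ∈ s, ∑ b ∈ s, f a b := by
  rw [← sum_product']
  refine sum_nbij' (fun w => (w 0, w 1)) (fun ab => ![ab.1, ab.2]) ?_ ?_ ?_ ?_ ?_ <;>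
    simp [Fin.forall_fin_two, funext_iff]

end Combinatorics

section InnerProduct

variable {H : Type*} [NormedAddCommGroup H] [InnerProductSpace ℝ H]

theorem norm_sum_sq_eq_sum_piFinset_inner {ι : Type*} (s : Finset ι) (v : ι → H) :
    ‖∑ a ∈ s, v a‖ ^ 2 = ∑ w ∈ piFinset (fun _ : Fin 2 => s), ⟪v (w 0), v (w 1)⟫_ℝ := by
  rw [← real_inner_self_eq_norm_sq, sum_inner]
  simp_rw [inner_sum]
  exact (sum_piFinset_fin_two s fun a b => ⟪v a, v b⟫_ℝ).symm

theorem abs_prod_inner_le_prod_prod_norm {κ : Type*} [Fintype κ] (u : κ → Fin 2 → H) :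
    |∏ i, ⟪u i 0, u i 1⟫_ℝ| ≤ ∏ i, ∏ l, ‖u i l‖ := by
  rw [abs_prod]
  refine prod_le_prod (fun i _ => abs_nonneg _) fun i _ => ?_
  rw [Fin.prod_univ_two]
  exact abs_real_inner_le_norm _ _

end InnerProduct

section Integration

variable {X : Type*} [MeasurableSpace X] {μ : Measure X}
  {H : Type*} [NormedAddCommGroup H]

theorem integrable_prod_of_memLp_card {κ : Type*} [Fintype κ] [Nonempty κ] {f : κ → X → ℝ}
    (hf : ∀ k, MemLp (f k) (Fintype.card κ) μ) : Integrable (fun x => ∏ k, f k x) μ := by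
  have h := MemLp.prod' (s := univ) fun k _ => hf k
  rw [sum_const, card_univ, nsmul_eq_mul, ENNReal.mul_inv_cancel (by simp) (by simp),
    inv_one] at h
  exact memLp_one_iff_integrable.1 h

variable {ι κ : Type*} [Fintype κ] [Nonempty κ] {S : κ → Finset ι} {F : κ → ι → X → H}

theorem integrable_prod_prod_norm
    (hF : ∀ i v, v ∈ S i → MemLp (F i v) (Fintype.card (κ × Fin 2)) μ)
    {q : κ → Fin 2 → ι} (hq : ∀ i l, q i l ∈ S i) :
    Integrable (fun x => ∏ i, ∏ l, ‖F i (q i l) x‖) μ := by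
  simp_rw [← Fintype.prod_prod_type']
  exact integrable_prod_of_memLp_card fun p => (hF _ _ (hq p.1 p.2)).norm

theorem integrable_prod_sum_norm_sq [DecidableEq κ]
    (hF : ∀ i v, v ∈ S i → MemLp (F i v) (Fintype.card (κ × Fin 2)) μ) :
    Integrable (fun x => ∏ i, ∑ v ∈ S i, ‖F i v x‖ ^ 2) μ := by
  simp_rw [prod_univ_sum]
  refine integrable_finsetSum _ fun τ hτ => ?_
  simpa [Fin.prod_univ_two, sq] using
    integrable_prod_prod_norm hF (q := fun i _ => τ i) fun i _ => Fintype.mem_piFinset.1 hτ i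

variable [InnerProductSpace ℝ H]

theorem integrable_prod_inner
    (hF : ∀ i v, v ∈ S i → MemLp (F i v) (Fintype.card (κ × Fin 2)) μ)
    {q : κ → Fin 2 → ι} (hq : ∀ i l, q i l ∈ S i) :
    Integrable (fun x => ∏ i, ⟪F i (q i 0) x, F i (q i 1) x⟫_ℝ) μ := by
  refine (integrable_prod_prod_norm hF hq).mono' ?_
    (ae_of_all _ fun x => abs_prod_inner_le_prod_prod_norm fun i l => F i (q i l) x)
  exact Finset.aestronglyMeasurable_fun_prod _ fun i _ =>
    (hF _ _ (hq i 0)).1.inner (hF _ _ (hq i 1)).1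

theorem integral_prod_norm_sum_sq_le [DecidableEq κ] [DecidableEq ι]
    (hF : ∀ i v, v ∈ S i → MemLp (F i v) (Fintype.card (κ × Fin 2)) μ)
    (horth : ∀ q : κ → Fin 2 → ι, (∀ i l, q i l ∈ S i) → HasUniqueValue (Function.uncurry q) →
      ∫ x, ∏ i, ⟪F i (q i 0) x, F i (q i 1) x⟫_ℝ ∂μ = 0) :
    ∫ x, ∏ i, ‖∑ v ∈ S i, F i v x‖ ^ 2 ∂μ ≤
      Fintype.card (κ × Fin 2 → κ × Fin 2) * ∫ x, ∏ i, ∑ v ∈ S i, ‖F i v x‖ ^ 2 ∂μ := by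
  set Q := piFinset fun i => piFinset fun _ : Fin 2 => S i
  have mem_of_mem_Q {q} (hq : q ∈ Q) (i l) : q i l ∈ S i :=
    Fintype.mem_piFinset.1 (Fintype.mem_piFinset.1 hq i) l
  calc ∫ x, ∏ i, ‖∑ v ∈ S i, F i v x‖ ^ 2 ∂μ
      = ∑ q ∈ Q, ∫ x, ∏ i, ⟪F i (q i 0) x, F i (q i 1) x⟫_ℝ ∂μ := by
        simp_rw [norm_sum_sq_eq_sum_piFinset_inner, prod_univ_sum]
        exact integral_finsetSum _ fun q hq => integrable_prod_inner hF (mem_of_mem_Q hq)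
    _ = ∑ q ∈ Q with ¬HasUniqueValue (Function.uncurry q),
          ∫ x, ∏ i, ⟪F i (q i 0) x, F i (q i 1) x⟫_ℝ ∂μ :=
        (sum_filter_of_ne (p := fun q => ¬HasUniqueValue (Function.uncurry q))
          fun q hq h0 hunique => h0 (horth q (mem_of_mem_Q hq) hunique)).symm
    _ ≤ ∑ q ∈ Q with ¬HasUniqueValue (Function.uncurry q),
          ∫ x, ∏ i, ∏ l, ‖F i (q i l) x‖ ∂μ := by
        refine sum_le_sum fun q hq => ?_
        have hq := mem_of_mem_Q (mem_filter.1 hq).1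
        exact integral_mono (integrable_prod_inner hF hq) (integrable_prod_prod_norm hF hq)
          fun x => (le_abs_self _).trans
            (abs_prod_inner_le_prod_prod_norm fun i l => F i (q i l) x)
    _ = ∫ x, ∑ q ∈ Q with ¬HasUniqueValue (Function.uncurry q),
          ∏ i, ∏ l, ‖F i (q i l) x‖ ∂μ :=
        (integral_finsetSum _ fun q hq =>
          integrable_prod_prod_norm hF (mem_of_mem_Q (mem_filter.1 hq).1)).symm
    _ ≤ ∫ x, Fintype.card (κ × Fin 2 → κ × Fin 2) * ∏ i, ∑ v ∈ S i, ‖F i v x‖ ^ 2 ∂μ :=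
        integral_mono (integrable_finsetSum _ fun q hq =>
            integrable_prod_prod_norm hF (mem_of_mem_Q (mem_filter.1 hq).1))
          ((integrable_prod_sum_norm_sq hF).const_mul _)
          fun x => sum_prod_prod_not_hasUniqueValue_le S (a := fun i v => ‖F i v x‖)
            fun i v => norm_nonneg _
    _ = Fintype.card (κ × Fin 2 → κ × Fin 2) * ∫ x, ∏ i, ∑ v ∈ S i, ‖F i v x‖ ^ 2 ∂μ :=
        integral_const_mul _ _

end Integration

/-- Orthogonality lemma: if for every sequence `(q_i(0), q_i(1))_{i < r}` with entries
`q_i(l) ∈ S_i` having the uniqueness property (some value occurs exactly once) the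
integral of the product of inner products vanishes, then the integral of the product
of squared norms of the sums is controlled by the integral of the product of the sums
of squared norms, with a constant depending only on `r`. -/
theorem up_orthogonality_estimate (r : ℕ) (hr : 1 ≤ r) :
    ∃ C : ℝ, 0 < C ∧
      ∀ (X : Type) (_ : MeasurableSpace X) (μ : Measure X) (_ : SigmaFinite μ)
        (H : Type) (_ : NormedAddCommGroup H) (_ : InnerProductSpace ℝ H)
        (_ : CompleteSpace H) (_ : TopologicalSpace.SeparableSpace H)
        (ι : Type) (_ : DecidableEq ι)
        (S : Fin r → Finset ι) (F : Fin r → ι → X → H),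
        (∀ i q, q ∈ S i → MemLp (F i q) (2 * r) μ) →
        (∀ q : Fin r → Fin 2 → ι, (∀ i l, q i l ∈ S i) →
          (∃ i₀ l₀, ∀ i l, (i, l) ≠ (i₀, l₀) → q i l ≠ q i₀ l₀) →
          ∫ x, ∏ i, (inner ℝ (F i (q i 0) x) (F i (q i 1) x) : ℝ) ∂μ = 0) →
        ∫ x, ∏ i, ‖∑ q ∈ S i, F i q x‖ ^ 2 ∂μ ≤
          C * ∫ x, ∏ i, ∑ q ∈ S i, ‖F i q x‖ ^ 2 ∂μ := by
  have : Nonempty (Fin r) := ⟨⟨0, hr⟩⟩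
  refine ⟨Fintype.card (Fin r × Fin 2 → Fin r × Fin 2), by positivity, ?_⟩
  intro X _ μ _ H _ _ _ _ ι _ S F hF horth
  refine integral_prod_norm_sum_sq_le (fun i v hv => ?_) fun q hq ⟨⟨i₀, l₀⟩, hunique⟩ =>
    horth q hq ⟨i₀, l₀, fun i l hne => hunique (i, l) hne⟩
  simpa [mul_comm] using hF i v hv
end

section
/- Let k, l ∈ ℕ with l ≥ 1 and let ν = C(l+k−1, k−1) be the dimension of the space of homogeneous polynomials of degree l in k variables. Then there exist linear transformations L₁, ..., L_ν of ℝ^k with integer coefficients and determinant 1 (hence restricting to automorphisms of ℤ^k) such that: for each multi-index γ₀ with |γ₀| = l there exist integers c₀, ..., c_ν with c₀ > 0 so that for every homogeneous polynomial P of degree l in k variables, if θ is the coefficient of x^{γ₀} in P and σ_j is the coefficient of x₁^l in P(L_j(x)), then c₀·θ = c₁·σ₁ + ... + c_ν·σ_ν. -/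
/-!
The coefficient of `x_{i₀}^l` in `P(Lx)` is `P(L e_{i₀})`. Taking for `L` the identity matrix with
column `i₀` replaced by an integer vector `u` with `u_{i₀} = 1` (so `det L = u_{i₀} = 1`), the
right-hand side becomes a combination of point evaluations `P(u)`. A form vanishing at all such
`u` is zero (dehomogenize at `x_{i₀} = 1`), so over `ℚ` these evaluations span the dual of the
`ν`-dimensional space of forms of degree `l`. Hence `ν` of them form a basis, `P ↦ coeff γ₀ P` is a
rational combination of them, and clearing denominators gives the integers `c`.
-/

open MvPolynomial Module

theorem Matrix.det_one_updateCol {n R : Type*} [Fintype n] [DecidableEq n] [CommRing R] (j : n)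
    (v : n → R) : (Matrix.updateCol 1 j v).det = v j := by
  have hv : v = fun k => ∑ i, v i • (1 : Matrix n n R) k i := by
    funext k
    simp [Matrix.one_apply]
  conv_lhs => rw [hv]
  rw [Matrix.det_updateCol_sum, Matrix.det_one, smul_eq_mul, mul_one]

theorem exists_fin_finrank_span_comp_eq_top {K V ι : Type*} [DivisionRing K] [AddCommGroup V]
    [Module K V] [FiniteDimensional K V] (f : ι → V) (hf : Submodule.span K (Set.range f) = ⊤) :
    ∃ u : Fin (finrank K V) → ι, Submodule.span K (Set.range (f ∘ u)) = ⊤ := by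
  obtain ⟨κ, a, -, hspan, hli⟩ := exists_linearIndependent' K f
  let b := Basis.mk hli (by rw [hspan, hf])
  refine ⟨a ∘ (b.indexEquiv (finBasis K V)).symm, ?_⟩
  rw [← Function.comp_assoc, EquivLike.range_comp, hspan, hf]

theorem exists_pos_intCast_eq_mul {ι : Type*} [Fintype ι] (r : ι → ℚ) :
    ∃ d : ℤ, 0 < d ∧ ∃ c : ι → ℤ, ∀ i, (c i : ℚ) = d * r i := by
  have hdvd (i : ι) : (r i).den ∣ ∏ j, (r j).den := Finset.dvd_prod_of_mem _ (Finset.mem_univ i)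
  choose e he using hdvd
  refine ⟨((∏ j, (r j).den : ℕ) : ℤ), by positivity, fun i => e i * (r i).num, fun i => ?_⟩
  push_cast [he i]
  rw [mul_right_comm, Rat.den_mul_eq_num, mul_comm]

namespace MvPolynomial

variable {σ R : Type*}

theorem eval_aeval {τ : Type*} [CommSemiring R] (g : σ → MvPolynomial τ R) (x : τ → R)
    (p : MvPolynomial σ R) : eval x (aeval g p) = eval (fun i => eval x (g i)) p :=
  aeval_bind₁ x g p

theorem IsHomogeneous.eval_smul [CommSemiring R] {p : MvPolynomial σ R} {n : ℕ}
    (hp : p.IsHomogeneous n) (c : R) (x : σ → R) :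
    eval (c • x) p = c ^ n * eval x p := by
  rw [eval_eq, eval_eq, Finset.mul_sum]
  refine Finset.sum_congr rfl fun d hd => ?_
  simp only [Pi.smul_apply, smul_eq_mul, mul_pow, Finset.prod_mul_distrib,
    Finset.prod_pow_eq_pow_sum, ← hp.degree_eq_sum_deg_support hd]
  ring

theorem IsHomogeneous.coeff_single_eq_eval_piSingle [Fintype σ] [DecidableEq σ] [CommSemiring R]
    {p : MvPolynomial σ R} {n : ℕ} (hp : p.IsHomogeneous n) (i : σ) :
    coeff (Finsupp.single i n) p = eval (Pi.single i 1) p := by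
  rw [eval_eq', Finset.sum_eq_single (Finsupp.single i n)]
  · rw [Finset.prod_eq_one, mul_one]
    intro j _
    by_cases hj : j = i
    · subst hj; simp
    · simp [hj]
  · intro d hd hne
    obtain ⟨j, hji, hj⟩ : ∃ j ≠ i, d j ≠ 0 := by
      by_contra! h
      refine hne (Finsupp.ext fun j => ?_)
      rcases eq_or_ne j i with rfl | hji
      · rw [Finsupp.single_eq_same, hp.degree_eq_sum_deg_support hd, Finset.sum_eq_single j
          (fun k _ hk => h k hk) (fun hj => Finsupp.notMem_support_iff.mp hj)]
      · rw [h j hji, Finsupp.single_eq_of_ne hji]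
    rw [Finset.prod_eq_zero (Finset.mem_univ j) (by simp [hji, hj]), mul_zero]
  · intro h
    rw [notMem_support_iff.mp h, zero_mul]

theorem IsHomogeneous.coeff_single_aeval_linear [Fintype σ] [DecidableEq σ] [CommSemiring R]
    {p : MvPolynomial σ R} {n : ℕ} (hp : p.IsHomogeneous n) (a : σ → σ → R) (i : σ) :
    coeff (Finsupp.single i n) (MvPolynomial.aeval (fun k => ∑ j, C (a k j) * X j) p) =
      eval (fun k => a k i) p := by
  have hlin (k : σ) : (∑ j, C (a k j) * X j).IsHomogeneous 1 :=
    IsHomogeneous.sum _ _ _ fun j _ => isHomogeneous_C_mul_X _ _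
  have := (hp.aeval _ hlin).coeff_single_eq_eval_piSingle i
  rw [one_mul] at this
  rw [this, eval_aeval]
  refine congrArg (eval · p) (_root_.funext fun k => ?_)
  simp [Pi.single_apply]

theorem IsHomogeneous.eq_zero_of_eval_update_intCast_eq_zero {K : Type*} [Field K] [CharZero K]
    [DecidableEq σ] {p : MvPolynomial σ K} {n : ℕ} (hp : p.IsHomogeneous n) (i₀ : σ)
    (h : ∀ y : σ → ℤ, eval (fun i => (Function.update y i₀ 1 i : K)) p = 0) : p = 0 := by
  -- `q` is the dehomogenization of `p` at `x_{i₀} = 1`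
  set q := MvPolynomial.aeval (Function.update (X : σ → MvPolynomial σ K) i₀ 1) p
  have eval_q (x : σ → K) : eval x q = eval (Function.update x i₀ 1) p := by
    rw [eval_aeval]
    refine congrArg (eval · p) (_root_.funext fun i => ?_)
    by_cases hi : i = i₀ <;> simp [hi]
  have hq : q = 0 := by
    refine funext_set (fun _ => Set.range ((↑) : ℤ → K))
      (fun _ => Set.infinite_range_of_injective Int.cast_injective) fun x hx => ?_
    choose y hy using fun i => hx i (Set.mem_univ i)
    obtain rfl : (fun i => (y i : K)) = x := _root_.funext hy
    rw [eval_q, map_zero, ← h y]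
    refine congrArg (eval · p) (_root_.funext fun i => ?_)
    by_cases hi : i = i₀ <;> simp [hi]
  refine funext_set (fun i => if i = i₀ then {0}ᶜ else Set.univ)
    (fun i => ?_) fun x hx => ?_
  · split_ifs
    · exact (Set.finite_singleton 0).infinite_compl
    · exact Set.infinite_univ
  have hx₀ : x i₀ ≠ 0 := by simpa using hx i₀ (Set.mem_univ _)
  have hx_eq : x = x i₀ • Function.update ((x i₀)⁻¹ • x) i₀ 1 := by
    funext i
    by_cases hi : i = i₀ <;> simp [hi, hx₀]
  rw [hx_eq, hp.eval_smul, ← eval_q, hq, map_zero, map_zero, mul_zero]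

theorem IsHomogeneous.sum_intCast_mul_eval_eq_of_monomial [CommRing R] {ι : Type*} [Fintype ι]
    {n : ℕ} {u : ι → σ → ℤ} {c : ι → ℤ} {c₀ : ℤ} {γ₀ : σ →₀ ℕ}
    (h : ∀ γ : σ →₀ ℕ, γ.degree = n →
      ∑ m, c m * eval (u m) (monomial γ 1) = c₀ * coeff γ₀ (monomial γ 1))
    {p : MvPolynomial σ R} (hp : p.IsHomogeneous n) :
    ∑ m, (c m : R) * eval (fun i => (u m i : R)) p = c₀ * coeff γ₀ p := by
  have hmono (γ : σ →₀ ℕ) (hγ : γ ∈ p.support) :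
      ∑ m, (c m : R) * eval (fun i => (u m i : R)) (monomial γ (coeff γ p)) =
        c₀ * coeff γ₀ (monomial γ (coeff γ p)) := by
    have hcast := congrArg (Int.castRingHom R) (h γ (hp.degree_eq_sum_deg_support hγ).symm)
    simp only [map_sum, map_mul, eval₂_comp, ← coeff_map, ← eval_map, map_monomial,
      map_one] at hcast
    simp only [eq_intCast, Function.comp_def] at hcast
    rw [← mul_one (coeff γ p), ← smul_eq_mul, ← smul_monomial]
    simp only [smul_eval, coeff_smul, smul_eq_mul, mul_left_comm _ (coeff γ p), ← Finset.mul_sum]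
    rw [hcast]
  rw [p.as_sum]
  simp only [map_sum, coeff_sum, Finset.mul_sum]
  rw [Finset.sum_comm]
  exact Finset.sum_congr rfl hmono

instance [Finite σ] (K : Type*) [Field K] (n : ℕ) :
    FiniteDimensional K (homogeneousSubmodule σ K n) :=
  Module.Finite.iff_fg.mpr (homogeneousSubmodule_fg σ K n)

theorem finrank_homogeneousSubmodule [Fintype σ] [DecidableEq σ] (K : Type*) [Field K] (n : ℕ) :
    finrank K (homogeneousSubmodule σ K n) = (Fintype.card σ + n - 1).choose n := by
  have hset :
      {d : σ →₀ ℕ | d.degree = n} = ((Finset.univ : Finset σ).finsuppAntidiag n : Set _) := by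
    ext d
    simp [Finsupp.degree_eq_sum]
  rw [homogeneousSubmodule_eq_finsupp_supported, hset,
    (AddMonoidAlgebra.supportedEquivFinsupp _).finrank_eq, finrank_finsupp_self]
  simp [Finset.card_finsuppAntidiag_nat_eq_choose]

noncomputable def homogeneousEval (K : Type*) [Field K] (n : ℕ) (x : σ → K) :
    Dual K (homogeneousSubmodule σ K n) :=
  (aeval x).toLinearMap ∘ₗ (homogeneousSubmodule σ K n).subtype

@[simp]
theorem homogeneousEval_apply (K : Type*) [Field K] (n : ℕ) (x : σ → K)
    (p : homogeneousSubmodule σ K n) : homogeneousEval K n x p = eval x p :=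
  rfl

theorem span_homogeneousEval_update_intCast_eq_top [Finite σ] [DecidableEq σ] (K : Type*) [Field K]
    [CharZero K] (n : ℕ) (i₀ : σ) :
    Submodule.span K (Set.range fun y : σ → ℤ =>
      homogeneousEval K n fun i => (Function.update y i₀ 1 i : K)) = ⊤ := by
  refine Submodule.span_eq_top_of_ne_zero fun p hp => ?_
  by_contra! h
  exact hp (Subtype.ext (p.2.eq_zero_of_eval_update_intCast_eq_zero i₀ fun y => h _ ⟨y, rfl⟩))

theorem exists_intPoints_span_homogeneousEval_eq_top [Fintype σ] [DecidableEq σ] (n : ℕ) (i₀ : σ) :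
    ∃ u : Fin (finrank ℚ (homogeneousSubmodule σ ℚ n)) → σ → ℤ, (∀ m, u m i₀ = 1) ∧
      Submodule.span ℚ (Set.range fun m => homogeneousEval ℚ n fun i => (u m i : ℚ)) = ⊤ := by
  rw [← Subspace.dual_finrank_eq]
  obtain ⟨u, hu⟩ := exists_fin_finrank_span_comp_eq_top _
    (span_homogeneousEval_update_intCast_eq_top ℚ n i₀)
  exact ⟨fun m => Function.update (u m) i₀ 1, fun m => by simp, hu⟩

theorem exists_int_relation_of_span_homogeneousEval_eq_top {ι : Type*} [Fintype ι] {n : ℕ}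
    {u : ι → σ → ℤ}
    (hu : Submodule.span ℚ (Set.range fun m => homogeneousEval ℚ n fun i => (u m i : ℚ)) = ⊤)
    (γ₀ : σ →₀ ℕ) :
    ∃ c₀ : ℤ, 0 < c₀ ∧ ∃ c : ι → ℤ, ∀ γ : σ →₀ ℕ, γ.degree = n →
      ∑ m, c m * eval (u m) (monomial γ 1) = c₀ * coeff γ₀ (monomial γ 1) := by
  classical
  have hκ : lcoeff ℚ γ₀ ∘ₗ (homogeneousSubmodule σ ℚ n).subtype ∈
      Submodule.span ℚ (Set.range fun m => homogeneousEval ℚ n fun i => (u m i : ℚ)) :=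
    hu ▸ Submodule.mem_top
  obtain ⟨r, hr⟩ := (Submodule.mem_span_range_iff_exists_fun ℚ).mp hκ
  obtain ⟨d, hd, c, hc⟩ := exists_pos_intCast_eq_mul r
  refine ⟨d, hd, c, fun γ hγ => Int.cast_injective (α := ℚ) ?_⟩
  have := LinearMap.congr_fun hr ⟨monomial γ 1, isHomogeneous_monomial 1 hγ⟩
  simp only [LinearMap.coe_sum, Finset.sum_apply, LinearMap.smul_apply, homogeneousEval_apply,
    LinearMap.comp_apply, Submodule.subtype_apply, lcoeff_apply, smul_eq_mul] at this
  simp only [eval_monomial, coeff_monomial, Finsupp.prod] at this ⊢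
  push_cast [hc]
  rw [← this, Finset.mul_sum]
  refine Finset.sum_congr rfl fun m _ => by ring

end MvPolynomial

theorem vandermonde_coefficient_extraction_general (k l : ℕ) (hk : 0 < k) :
    ∃ L : Fin (Nat.choose (l + k - 1) (k - 1)) → Matrix (Fin k) (Fin k) ℤ,
      (∀ m, (L m).det = 1) ∧
      ∀ γ₀ : Fin k →₀ ℕ, (∑ i, γ₀ i) = l →
        ∃ c : Fin (Nat.choose (l + k - 1) (k - 1) + 1) → ℤ, 0 < c 0 ∧
          ∀ P : MvPolynomial (Fin k) ℝ, P.IsHomogeneous l →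
            (c 0 : ℝ) * MvPolynomial.coeff γ₀ P =
              ∑ m, (c m.succ : ℝ) *
                MvPolynomial.coeff (Finsupp.single (⟨0, hk⟩ : Fin k) l)
                  (MvPolynomial.aeval
                    (fun i => ∑ j, MvPolynomial.C ((L m i j : ℤ) : ℝ) * MvPolynomial.X j)
                    P) := by
  set i₀ : Fin k := ⟨0, hk⟩
  have hν : (l + k - 1).choose (k - 1) = finrank ℚ (homogeneousSubmodule (Fin k) ℚ l) := by
    obtain ⟨k, rfl⟩ : ∃ k', k = k' + 1 := ⟨k - 1, by omega⟩
    rw [finrank_homogeneousSubmodule, Fintype.card_fin, Nat.add_sub_cancel,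
      show l + (k + 1) - 1 = k + l by omega, show k + 1 + l - 1 = k + l by omega,
      Nat.choose_symm_add]
  rw [hν]
  obtain ⟨u, hu, hspan⟩ := exists_intPoints_span_homogeneousEval_eq_top l i₀
  refine ⟨fun m => Matrix.updateCol 1 i₀ (u m), fun m => by rw [Matrix.det_one_updateCol, hu],
    fun γ₀ _ => ?_⟩
  obtain ⟨c₀, hc₀, c, hc⟩ := exists_int_relation_of_span_homogeneousEval_eq_top hspan γ₀
  refine ⟨Fin.cons c₀ c, hc₀, fun P hP => ?_⟩
  simp only [Fin.cons_zero, Fin.cons_succ, hP.coeff_single_aeval_linear, Matrix.updateCol_self]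
  exact (hP.sum_intCast_mul_eval_eq_of_monomial hc).symm

/-- There exist `ν = C(l+k−1, k−1)` integer matrices `L₁, …, L_ν` of determinant `1`
(automorphisms of `ℤ^k`) such that for each multi-index `γ₀` of degree `l` there are
integers `c₀ > 0, c₁, …, c_ν` with: for every homogeneous polynomial `P` of degree `l`,
`c₀ · (coefficient of x^{γ₀} in P) = Σ_j c_j · (coefficient of x₁^l in P(L_j x))`. -/
theorem vandermonde_coefficient_extraction (k l : ℕ) (hk : 0 < k) (hl : 1 ≤ l) :
    ∃ L : Fin (Nat.choose (l + k - 1) (k - 1)) → Matrix (Fin k) (Fin k) ℤ,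
      (∀ m, (L m).det = 1) ∧
      ∀ γ₀ : Fin k →₀ ℕ, (∑ i, γ₀ i) = l →
        ∃ c : Fin (Nat.choose (l + k - 1) (k - 1) + 1) → ℤ, 0 < c 0 ∧
          ∀ P : MvPolynomial (Fin k) ℝ, P.IsHomogeneous l →
            (c 0 : ℝ) * MvPolynomial.coeff γ₀ P =
              ∑ m, (c m.succ : ℝ) *
                MvPolynomial.coeff (Finsupp.single (⟨0, hk⟩ : Fin k) l)
                  (MvPolynomial.aeval
                    (fun i => ∑ j, MvPolynomial.C ((L m i j : ℤ) : ℝ) * MvPolynomial.X j)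
                    P) :=
  vandermonde_coefficient_extraction_general k l hk
end
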